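/- arXiv:1903.04242 — 4 statements merged into one kernel-verified Lean document; each statement's English description precedes it below -/
import Mathlib

section
/- For every ζ ∈ ℂ there exists a unique continuous function φ(·,ζ) : [0,∞) → ℂ satisfying the Volterra integral equation φ(x,ζ) = S_ζ(x) + ∫₀ˣ S_ζ(x−y) v(y) φ(y,ζ) dy for all x ≥ 0 (this unique solution is called the regular solution). -/
open MeasureTheory Set

/-- `S ζ t = sin(ζ t)/ζ` for `ζ ≠ 0`, and `S 0 t = t`. -/
noncomputable def S (ζ : ℂ) (t : ℝ) : ℂ :=
  if ζ = 0 then (t : ℂ) else Complex.sin (ζ * t) / ζ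

/-!
For a continuous kernel `k` and a locally bounded weight `w`, the Volterra operator
`V u x = ∫₀ˣ k (x - y) w y u y dy` satisfies `‖Vⁿ u x‖ ≤ D (K M x)ⁿ / n!` on `[0, T]`, where
`K, M, D` bound `k, w, u` there. Hence the Neumann series `∑ Vⁿ f` converges locally uniformly
to a continuous solution of `φ = f + V φ`, and the difference `g` of two solutions satisfies
`g = Vⁿ g` for every `n`, so it vanishes.
-/

open Filter Topology

noncomputable def volterra (k w u : ℝ → ℂ) (x : ℝ) : ℂ :=
  ∫ y in (0 : ℝ)..x, k (x - y) * w y * u y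

theorem continuous_S (ζ : ℂ) : Continuous (S ζ) := by
  unfold S
  split_ifs
  · exact Complex.continuous_ofReal
  · fun_prop

theorem norm_mul_mul_le {R : Type*} [SeminormedRing R] {a b c : R} {A B C : ℝ} (ha : ‖a‖ ≤ A)
    (hb : ‖b‖ ≤ B) (hc : ‖c‖ ≤ C) (hA : 0 ≤ A) (hB : 0 ≤ B) : ‖a * b * c‖ ≤ A * B * C :=
  calc ‖a * b * c‖ ≤ ‖a‖ * ‖b‖ * ‖c‖ :=
        (norm_mul_le _ _).trans (mul_le_mul_of_nonneg_right (norm_mul_le _ _) (norm_nonneg _))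
    _ ≤ A * B * C :=
        mul_le_mul (mul_le_mul ha hb (norm_nonneg _) hA) hc (norm_nonneg _) (mul_nonneg hA hB)

theorem continuousAt_indicator_Ici {β : Type*} [TopologicalSpace β] [Zero β] {G : ℝ → β}
    {x₀ y : ℝ} (hG : ContinuousAt G x₀) (hy : x₀ ≠ y) : ContinuousAt ((Ici y).indicator G) x₀ := by
  rcases hy.lt_or_gt with hx₀ | hx₀
  · refine (continuousAt_const (y := (0 : β))).congr (EventuallyEq.symm ?_)
    filter_upwards [Iio_mem_nhds hx₀] with x hx
    exact indicator_of_notMem (not_le.2 hx) _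
  · refine hG.congr (EventuallyEq.symm ?_)
    filter_upwards [Ioi_mem_nhds hx₀] with x hx
    exact indicator_of_mem (le_of_lt hx) _

section Volterra

variable {k w u u' f : ℝ → ℂ} {x T K M : ℝ}

theorem volterra_congr (h : EqOn u u' (Ici 0)) :
    EqOn (volterra k w u) (volterra k w u') (Ici 0) := fun x hx =>
  intervalIntegral.integral_congr fun y hy => by
    rw [uIcc_of_le hx] at hy
    simp only [h hy.1]

theorem volterra_sub (hu : IntervalIntegrable (fun y => k (x - y) * w y * u y) volume 0 x)
    (hu' : IntervalIntegrable (fun y => k (x - y) * w y * u' y) volume 0 x) :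
    volterra k w (u - u') x = volterra k w u x - volterra k w u' x := by
  rw [volterra, volterra, volterra, ← intervalIntegral.integral_sub hu hu']
  simp only [Pi.sub_apply, mul_sub]

theorem volterra_integrand_intervalIntegrable (hk : Continuous k)
    (hw : AEStronglyMeasurable w) (hM : ∀ y ∈ Icc 0 x, ‖w y‖ ≤ M)
    (hu : ContinuousOn u (Icc 0 x)) (hx : 0 ≤ x) :
    IntervalIntegrable (fun y => k (x - y) * w y * u y) volume 0 x := by
  have hku : IntegrableOn (fun y => k (x - y) * u y) (Ioc 0 x) :=
    ((hk.comp (continuous_const.sub continuous_id)).continuousOn.mul hu).integrableOn_Icc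
      |>.mono_set Ioc_subset_Icc_self
  have hM' : ∀ᵐ y ∂volume.restrict (Ioc 0 x), ‖w y‖ ≤ M :=
    (ae_restrict_iff' measurableSet_Ioc).2 (ae_of_all _ fun y hy => hM y (Ioc_subset_Icc_self hy))
  rw [intervalIntegrable_iff_integrableOn_Ioc_of_le hx]
  refine (hku.bdd_mul hw.restrict hM').congr (ae_of_all _ fun y => ?_)
  ring

theorem norm_volterra_le {c : ℝ} {n : ℕ} (hx : 0 ≤ x) (hK : ∀ t ∈ Icc 0 x, ‖k t‖ ≤ K)
    (hM : ∀ y ∈ Icc 0 x, ‖w y‖ ≤ M)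
    (hu : ∀ y ∈ Icc 0 x, ‖u y‖ ≤ c * (K * M * y) ^ n / n.factorial) :
    ‖volterra k w u x‖ ≤ c * (K * M * x) ^ (n + 1) / (n + 1).factorial := by
  have hK0 : 0 ≤ K := (norm_nonneg _).trans (hK 0 ⟨le_rfl, hx⟩)
  have hM0 : 0 ≤ M := (norm_nonneg _).trans (hM 0 ⟨le_rfl, hx⟩)
  have hbound : ∀ y ∈ Ioc 0 x,
      ‖k (x - y) * w y * u y‖ ≤ c * (K * M) ^ (n + 1) / n.factorial * y ^ n := by
    intro y hy
    have hy' : y ∈ Icc 0 x := Ioc_subset_Icc_self hy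
    calc ‖k (x - y) * w y * u y‖ ≤ K * M * (c * (K * M * y) ^ n / n.factorial) :=
          norm_mul_mul_le (hK _ ⟨by linarith [hy.2], by linarith [hy.1]⟩) (hM y hy') (hu y hy')
            hK0 hM0
      _ = c * (K * M) ^ (n + 1) / n.factorial * y ^ n := by ring
  calc ‖volterra k w u x‖ ≤ ∫ y in (0 : ℝ)..x, c * (K * M) ^ (n + 1) / n.factorial * y ^ n :=
        intervalIntegral.norm_integral_le_of_norm_le hx (ae_of_all _ hbound)
          (by apply Continuous.intervalIntegrable; fun_prop)
    _ = c * (K * M * x) ^ (n + 1) / (n + 1).factorial := by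
        rw [intervalIntegral.integral_const_mul, integral_pow, Nat.factorial_succ]
        push_cast
        field_simp
        ring

theorem norm_iterate_volterra_le {D : ℝ} (hK : ∀ t ∈ Icc 0 T, ‖k t‖ ≤ K)
    (hM : ∀ y ∈ Icc 0 T, ‖w y‖ ≤ M) (hD : ∀ y ∈ Icc 0 T, ‖u y‖ ≤ D) (n : ℕ) :
    ∀ x ∈ Icc 0 T, ‖(volterra k w)^[n] u x‖ ≤ D * (K * M * x) ^ n / n.factorial := by
  induction n with
  | zero => simpa using hD
  | succ n ih =>
    intro x hx
    have hsub : Icc 0 x ⊆ Icc 0 T := Icc_subset_Icc_right hx.2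
    rw [Function.iterate_succ_apply']
    exact norm_volterra_le hx.1 (fun t ht => hK t (hsub ht)) (fun y hy => hM y (hsub hy))
      (fun y hy => ih y (hsub hy))

theorem exists_norm_iterate_volterra_le (hk : Continuous k)
    (hwM : ∀ T, ∃ M, ∀ y ∈ Icc 0 T, ‖w y‖ ≤ M) (hu : ContinuousOn u (Ici 0)) (T : ℝ) :
    ∃ B L : ℝ, ∀ n, ∀ x ∈ Icc 0 T, ‖(volterra k w)^[n] u x‖ ≤ B * L ^ n / n.factorial := by
  obtain ⟨K, hK⟩ := isCompact_Icc.exists_bound_of_continuousOn (hk.continuousOn (s := Icc 0 T))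
  obtain ⟨M, hM⟩ := hwM T
  obtain ⟨D, hD⟩ := isCompact_Icc.exists_bound_of_continuousOn (hu.mono Icc_subset_Ici_self)
  refine ⟨D, K * M * T, fun n x hx => (norm_iterate_volterra_le hK hM hD n x hx).trans ?_⟩
  have h0 : (0 : ℝ) ∈ Icc 0 T := ⟨le_rfl, hx.1.trans hx.2⟩
  have hK0 : 0 ≤ K := (norm_nonneg _).trans (hK 0 h0)
  have hM0 : 0 ≤ M := (norm_nonneg _).trans (hM 0 h0)
  have hD0 : 0 ≤ D := (norm_nonneg _).trans (hD 0 h0)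
  have hx0 := hx.1
  gcongr
  exact hx.2

theorem continuousOn_volterra (hk : Continuous k) (hw : AEStronglyMeasurable w)
    (hwM : ∀ T, ∃ M, ∀ y ∈ Icc 0 T, ‖w y‖ ≤ M) (hu : ContinuousOn u (Ici 0)) :
    ContinuousOn (volterra k w u) (Ici 0) := by
  intro x₀ hx₀
  set b := x₀ + 1
  have hb : (0 : ℝ) ≤ b := by simp only [mem_Ici] at hx₀; linarith
  have hnear : Icc 0 b ∈ 𝓝[Ici 0] x₀ :=
    inter_mem_nhdsWithin _ (Iic_mem_nhds (by linarith))
  obtain ⟨K, hK⟩ := isCompact_Icc.exists_bound_of_continuousOn (hk.continuousOn (s := Icc 0 b))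
  obtain ⟨M, hM⟩ := hwM b
  obtain ⟨U, hU⟩ := isCompact_Icc.exists_bound_of_continuousOn
    (hu.mono (Icc_subset_Ici_self : Icc 0 b ⊆ Ici 0))
  have hK0 : 0 ≤ K := (norm_nonneg _).trans (hK 0 ⟨le_rfl, hb⟩)
  have hM0 : 0 ≤ M := (norm_nonneg _).trans (hM 0 ⟨le_rfl, hb⟩)
  have hU0 : 0 ≤ U := (norm_nonneg _).trans (hU 0 ⟨le_rfl, hb⟩)
  -- For `x ∈ [0, b]` the variable upper limit becomes an indicator inside a fixed interval
  -- integral, whose integrand is continuous in `x` at every `y ≠ x₀`.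
  set F : ℝ → ℝ → ℂ := fun x => {y | y ≤ x}.indicator fun y => k (x - y) * w y * u y
  have hF : volterra k w u =ᶠ[𝓝[Ici 0] x₀] fun x => ∫ y in (0 : ℝ)..b, F x y := by
    filter_upwards [hnear] with x hx
    exact (intervalIntegral.integral_indicator hx).symm
  refine ContinuousWithinAt.congr_of_eventuallyEq_of_mem ?_ hF hx₀
  apply intervalIntegral.continuousWithinAt_of_dominated_interval (bound := fun _ => K * M * U)
  · rw [uIoc_of_le hb]
    refine Eventually.of_forall fun x => AEStronglyMeasurable.indicator ?_ measurableSet_Iic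
    exact ((hk.comp (continuous_const.sub continuous_id)).aestronglyMeasurable.mul hw.restrict).mul
      ((hu.mono fun y hy => hy.1.le).aestronglyMeasurable measurableSet_Ioc)
  · filter_upwards [hnear] with x hx
    refine ae_of_all _ fun y hy => ?_
    rw [uIoc_of_le hb] at hy
    by_cases hyx : y ≤ x
    · simp only [F, indicator_of_mem (show y ∈ {y | y ≤ x} from hyx)]
      exact norm_mul_mul_le (hK _ ⟨by linarith, by linarith [hx.2, hy.1]⟩)
        (hM y (Ioc_subset_Icc_self hy)) (hU y (Ioc_subset_Icc_self hy)) hK0 hM0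
    · simp only [F, indicator_of_notMem (show y ∉ {y | y ≤ x} from hyx), norm_zero]
      positivity
  · exact intervalIntegrable_const
  · filter_upwards [measure_eq_zero_iff_ae_notMem.1 (measure_singleton x₀)] with y hy _
    exact (continuousAt_indicator_Ici (G := fun x => k (x - y) * w y * u y) (by fun_prop)
      (Ne.symm hy)).continuousWithinAt

theorem hasSum_volterra {U : ℕ → ℝ → ℂ} {φ : ℝ → ℂ} {a : ℕ → ℝ} (hk : Continuous k)
    (hw : AEStronglyMeasurable w) (hM : ∀ y ∈ Icc 0 x, ‖w y‖ ≤ M) (hx : 0 ≤ x)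
    (hU : ∀ n, ContinuousOn (U n) (Icc 0 x)) (hUa : ∀ n, ∀ y ∈ Icc 0 x, ‖U n y‖ ≤ a n)
    (ha : Summable a) (hφ : ∀ y ∈ Icc 0 x, HasSum (fun n => U n y) (φ y)) :
    HasSum (fun n => volterra k w (U n) x) (volterra k w φ x) := by
  obtain ⟨K, hK⟩ := isCompact_Icc.exists_bound_of_continuousOn (hk.continuousOn (s := Icc 0 x))
  have hK0 : 0 ≤ K := (norm_nonneg _).trans (hK 0 ⟨le_rfl, hx⟩)
  have hM0 : 0 ≤ M := (norm_nonneg _).trans (hM 0 ⟨le_rfl, hx⟩)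
  refine intervalIntegral.hasSum_integral_of_dominated_convergence (fun n _ => K * M * a n)
    (fun n => (volterra_integrand_intervalIntegrable hk hw hM (hU n) hx).def'.aestronglyMeasurable)
    (fun n => ae_of_all _ fun y hy => ?_) (ae_of_all _ fun _ _ => ha.mul_left (K * M))
    intervalIntegrable_const (ae_of_all _ fun y hy => ?_)
  all_goals
    rw [uIoc_of_le hx] at hy
    have hy' : y ∈ Icc 0 x := Ioc_subset_Icc_self hy
  · exact norm_mul_mul_le (hK _ ⟨by linarith [hy.2], by linarith [hy.1]⟩) (hM y hy') (hUa n y hy')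
      hK0 hM0
  · exact (hφ y hy').mul_left _

theorem eqOn_zero_of_eqOn_volterra {g : ℝ → ℂ} (hk : Continuous k)
    (hwM : ∀ T, ∃ M, ∀ y ∈ Icc 0 T, ‖w y‖ ≤ M) (hg : ContinuousOn g (Ici 0))
    (h : EqOn g (volterra k w g) (Ici 0)) : EqOn g 0 (Ici 0) := by
  have hiter : ∀ n, EqOn g ((volterra k w)^[n] g) (Ici 0) := by
    intro n
    induction n with
    | zero => exact fun _ _ => rfl
    | succ n ih =>
      rw [Function.iterate_succ']
      exact h.trans (volterra_congr ih)
  intro x hx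
  obtain ⟨B, L, hBL⟩ := exists_norm_iterate_volterra_le hk hwM hg x
  have hle : ∀ n : ℕ, ‖g x‖ ≤ B * L ^ n / n.factorial := fun n => by
    rw [hiter n hx]
    exact hBL n x ⟨hx, le_rfl⟩
  have hlim : Tendsto (fun n : ℕ => B * L ^ n / n.factorial) atTop (𝓝 0) := by
    simpa [mul_div_assoc] using (FloorSemiring.tendsto_pow_div_factorial_atTop L).const_mul B
  exact norm_le_zero_iff.1 (ge_of_tendsto' hlim hle)

theorem eqOn_of_eqOn_add_volterra {φ ψ : ℝ → ℂ} (hk : Continuous k) (hw : AEStronglyMeasurable w)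
    (hwM : ∀ T, ∃ M, ∀ y ∈ Icc 0 T, ‖w y‖ ≤ M) (hφ : ContinuousOn φ (Ici 0))
    (hψ : ContinuousOn ψ (Ici 0)) (hφf : EqOn φ (f + volterra k w φ) (Ici 0))
    (hψf : EqOn ψ (f + volterra k w ψ) (Ici 0)) : EqOn ψ φ (Ici 0) := by
  have hdiff : EqOn (ψ - φ) (volterra k w (ψ - φ)) (Ici 0) := by
    intro x hx
    obtain ⟨M, hM⟩ := hwM x
    have hsub : Icc 0 x ⊆ Ici 0 := Icc_subset_Ici_self
    rw [volterra_sub (volterra_integrand_intervalIntegrable hk hw hM (hψ.mono hsub) hx)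
      (volterra_integrand_intervalIntegrable hk hw hM (hφ.mono hsub) hx), Pi.sub_apply,
      hψf hx, hφf hx, Pi.add_apply, Pi.add_apply]
    ring
  exact fun x hx => sub_eq_zero.1 (eqOn_zero_of_eqOn_volterra hk hwM (hψ.sub hφ) hdiff hx)

theorem exists_continuousOn_eqOn_add_volterra (hk : Continuous k) (hw : AEStronglyMeasurable w)
    (hwM : ∀ T, ∃ M, ∀ y ∈ Icc 0 T, ‖w y‖ ≤ M) (hf : ContinuousOn f (Ici 0)) :
    ∃ φ, ContinuousOn φ (Ici 0) ∧ EqOn φ (f + volterra k w φ) (Ici 0) := by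
  set U : ℕ → ℝ → ℂ := fun n => (volterra k w)^[n] f
  have hU : ∀ n, ContinuousOn (U n) (Ici 0) := by
    intro n
    induction n with
    | zero => exact hf
    | succ n ih =>
      simp only [U, Function.iterate_succ_apply']
      exact continuousOn_volterra hk hw hwM ih
  have hUsum : ∀ T, ∃ a : ℕ → ℝ, Summable a ∧ ∀ n, ∀ y ∈ Icc 0 T, ‖U n y‖ ≤ a n := fun T => by
    obtain ⟨B, L, hBL⟩ := exists_norm_iterate_volterra_le hk hwM hf T
    exact ⟨fun n => B * L ^ n / n.factorial, by simpa [mul_div_assoc] using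
      (Real.summable_pow_div_factorial L).mul_left B, hBL⟩
  have hφ : ∀ x ∈ Ici (0 : ℝ), HasSum (fun n => U n x) (∑' n, U n x) := fun x hx => by
    obtain ⟨a, ha, hUa⟩ := hUsum x
    exact (ha.of_norm_bounded fun n => hUa n x ⟨hx, le_rfl⟩).hasSum
  refine ⟨fun x => ∑' n, U n x, fun x hx => ?_, fun x hx => ?_⟩
  · obtain ⟨a, ha, hUa⟩ := hUsum (x + 1)
    have hx' : (0 : ℝ) ≤ x := hx
    refine ((continuousOn_tsum (fun n => (hU n).mono Icc_subset_Ici_self) ha hUa) x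
      ⟨hx', by linarith⟩).mono_of_mem_nhdsWithin (inter_mem_nhdsWithin _ (Iic_mem_nhds ?_))
    linarith
  · obtain ⟨a, ha, hUa⟩ := hUsum x
    obtain ⟨M, hM⟩ := hwM x
    have hV := hasSum_volterra hk hw hM hx (fun n => (hU n).mono Icc_subset_Ici_self) hUa ha
      fun y hy => hφ y hy.1
    have hshift := (hasSum_nat_add_iff' 1).2 (hφ x hx)
    simp only [U, Function.iterate_succ_apply', Finset.range_one, Finset.sum_singleton,
      Function.iterate_zero_apply] at hshift
    simp only [Pi.add_apply, ← hshift.unique hV]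
    ring

end Volterra

theorem regular_solution_exists_unique_general
    (v : ℝ → ℝ) (hv_meas : Measurable v) (C₀ ρ : ℝ)
    (hv : ∀ x : ℝ, 0 ≤ x → |v x| ≤ C₀ * (1 + x) ^ (-ρ)) (ζ : ℂ) :
    ∃ φ : ℝ → ℂ,
      (ContinuousOn φ (Set.Ici 0) ∧
        ∀ x : ℝ, 0 ≤ x →
          φ x = S ζ x + ∫ y in (0:ℝ)..x, S ζ (x - y) * (v y : ℂ) * φ y) ∧
      ∀ ψ : ℝ → ℂ,
        ContinuousOn ψ (Set.Ici 0) →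
        (∀ x : ℝ, 0 ≤ x →
          ψ x = S ζ x + ∫ y in (0:ℝ)..x, S ζ (x - y) * (v y : ℂ) * ψ y) →
        Set.EqOn ψ φ (Set.Ici 0) := by
  have hw : AEStronglyMeasurable (fun y => (v y : ℂ)) :=
    hv_meas.complex_ofReal.aestronglyMeasurable
  have hwM : ∀ T, ∃ M, ∀ y ∈ Icc 0 T, ‖(v y : ℂ)‖ ≤ M := fun T => by
    have hcont : ContinuousOn (fun y : ℝ => C₀ * (1 + y) ^ (-ρ)) (Icc 0 T) :=
      continuousOn_const.mul (ContinuousOn.rpow_const (by fun_prop)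
        fun y hy => Or.inl (by linarith [hy.1]))
    obtain ⟨M, hM⟩ := isCompact_Icc.exists_bound_of_continuousOn hcont
    exact ⟨M, fun y hy => by
      rw [Complex.norm_real, Real.norm_eq_abs]
      exact (hv y hy.1).trans ((le_abs_self _).trans (hM y hy))⟩
  obtain ⟨φ, hφc, hφeq⟩ :=
    exists_continuousOn_eqOn_add_volterra (continuous_S ζ) hw hwM (continuous_S ζ).continuousOn
  exact ⟨φ, ⟨hφc, fun x hx => hφeq hx⟩, fun ψ hψc hψeq =>
    eqOn_of_eqOn_add_volterra (continuous_S ζ) hw hwM hφc hψc hφeq fun x hx => hψeq x hx⟩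

/-- Existence and uniqueness of the regular solution of the Volterra integral
equation `φ(x,ζ) = S_ζ(x) + ∫₀ˣ S_ζ(x−y) v(y) φ(y,ζ) dy` among continuous
functions on `[0,∞)`. -/
theorem regular_solution_exists_unique
    (v : ℝ → ℝ) (hv_meas : Measurable v) (C₀ ρ : ℝ)
    (hC₀ : 0 < C₀) (hρ : 2 < ρ)
    (hv : ∀ x : ℝ, 0 ≤ x → |v x| ≤ C₀ * (1 + x) ^ (-ρ)) (ζ : ℂ) :
    ∃ φ : ℝ → ℂ,
      (ContinuousOn φ (Set.Ici 0) ∧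
        ∀ x : ℝ, 0 ≤ x →
          φ x = S ζ x + ∫ y in (0:ℝ)..x, S ζ (x - y) * (v y : ℂ) * φ y) ∧
      ∀ ψ : ℝ → ℂ,
        ContinuousOn ψ (Set.Ici 0) →
        (∀ x : ℝ, 0 ≤ x →
          ψ x = S ζ x + ∫ y in (0:ℝ)..x, S ζ (x - y) * (v y : ℂ) * ψ y) →
        Set.EqOn ψ φ (Set.Ici 0) :=
  regular_solution_exists_unique_general v hv_meas C₀ ρ hv ζ
end

section
/- For every ζ ∈ ℂ with Im ζ ≥ 0 and ζ ≠ 0 there exists a unique continuous function θ : [0,∞) → ℂ with sup_{x≥0} e^{Im(ζ)x}|θ(x)| < ∞ satisfying the Volterra integral equation θ(x) = e^{iζx} + ζ^{−1} ∫ₓ^∞ sin(ζ(x−y)) v(y) θ(y) dy for all x ≥ 0 (this unique solution is called the Jost solution θ(·,ζ)). -/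
/-!
Put `ψ(x) = e^{Im(ζ) x} θ(x)`. On `[0, ∞)` the equation becomes `ψ = f + ∫ₓ^∞ K(x, y) ψ(y) dy`
with `|f| = 1` and, because `|sin w| ≤ e^{|Im w|}` and `Im ζ ≥ 0`, `|K(x, y)| ≤ |ζ|⁻¹ |v(y)|`
for `x ≤ y`. For a Volterra operator `T` whose kernel has an integrable majorant `κ` with tail
`σ(x) = ∫ₓ^∞ κ`, induction gives `|Tⁿφ - Tⁿψ|(x) ≤ σ(x)ⁿ / n! · ‖φ - ψ‖`, so some iterate of `T` is
a contraction on bounded continuous functions and `T` has a unique fixed point. Cutting `v` off at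
`0` makes `T` depend only on values on `[0, ∞)`, so every solution on the half-line is the
restriction of that fixed point.
-/

open MeasureTheory Set Filter Topology BoundedContinuousFunction

section TailIntegral

variable {κ : ℝ → ℝ}

noncomputable def tailIntegral (κ : ℝ → ℝ) (s : ℝ) : ℝ := ∫ y in Ioi s, κ y

lemma tailIntegral_nonneg (hκ₀ : 0 ≤ κ) (s : ℝ) : 0 ≤ tailIntegral κ s :=
  setIntegral_nonneg measurableSet_Ioi fun y _ => hκ₀ y

lemma tailIntegral_le_integral (hκ : Integrable κ) (hκ₀ : 0 ≤ κ) (s : ℝ) :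
    tailIntegral κ s ≤ ∫ y, κ y :=
  setIntegral_le_integral hκ (.of_forall hκ₀)

lemma tailIntegral_eq_sub_intervalIntegral (hκ : Integrable κ) (s : ℝ) :
    tailIntegral κ s = tailIntegral κ 0 - ∫ t in (0 : ℝ)..s, κ t := by
  have split : ∀ a b : ℝ, a ≤ b → tailIntegral κ a = (∫ t in Ioc a b, κ t) + tailIntegral κ b := by
    intro a b hab
    rw [tailIntegral, tailIntegral, ← setIntegral_union (Ioc_disjoint_Ioi le_rfl) measurableSet_Ioi
      hκ.integrableOn hκ.integrableOn, Ioc_union_Ioi_eq_Ioi hab]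
  rcases le_total 0 s with h | h
  · rw [intervalIntegral.integral_of_le h, split 0 s h]; ring
  · rw [intervalIntegral.integral_symm, intervalIntegral.integral_of_le h, split s 0 h]; ring

lemma hasDerivAt_tailIntegral (hκ : Integrable κ) (hκc : Continuous κ) (s : ℝ) :
    HasDerivAt (tailIntegral κ) (-κ s) s := by
  rw [funext (tailIntegral_eq_sub_intervalIntegral hκ)]
  exact (intervalIntegral.integral_hasDerivAt_right hκ.intervalIntegrable
    (hκc.stronglyMeasurableAtFilter _ _) hκc.continuousAt).const_sub _

lemma tendsto_tailIntegral_atTop (hκ : Integrable κ) : Tendsto (tailIntegral κ) atTop (𝓝 0) := by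
  have h := (intervalIntegral_tendsto_integral_Ioi 0 hκ.integrableOn tendsto_id).const_sub
    (tailIntegral κ 0)
  rw [← tailIntegral, sub_self] at h
  simpa only [id, ← tailIntegral_eq_sub_intervalIntegral hκ] using h

lemma integrable_mul_tailIntegral_pow (hκ : Integrable κ) (hκc : Continuous κ) (hκ₀ : 0 ≤ κ)
    (n : ℕ) : Integrable fun y => κ y * tailIntegral κ y ^ n :=
  hκ.mul_bdd (c := (∫ y, κ y) ^ n)
    (((continuous_iff_continuousAt.2 fun y =>
      (hasDerivAt_tailIntegral hκ hκc y).continuousAt).pow n).aestronglyMeasurable)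
    (.of_forall fun y => by
      rw [Real.norm_of_nonneg (pow_nonneg (tailIntegral_nonneg hκ₀ y) n)]
      exact pow_le_pow_left₀ (tailIntegral_nonneg hκ₀ y) (tailIntegral_le_integral hκ hκ₀ y) n)

lemma integral_mul_tailIntegral_pow (hκ : Integrable κ) (hκc : Continuous κ) (hκ₀ : 0 ≤ κ)
    (n : ℕ) (s : ℝ) :
    ∫ y in Ioi s, κ y * tailIntegral κ y ^ n = tailIntegral κ s ^ (n + 1) / (n + 1) := by
  have hderiv : ∀ y ∈ Ici s, HasDerivAt (fun t => -tailIntegral κ t ^ (n + 1) / (n + 1))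
      (κ y * tailIntegral κ y ^ n) y := fun y _ => by
    refine ((((hasDerivAt_tailIntegral hκ hκc y).fun_pow (n + 1)).neg).div_const
      ((n : ℝ) + 1)).congr_deriv ?_
    push_cast
    field_simp
  have hlim : Tendsto (fun t => -tailIntegral κ t ^ (n + 1) / (n + 1)) atTop (𝓝 0) := by
    simpa using (((tendsto_tailIntegral_atTop hκ).pow (n + 1)).neg).div_const ((n : ℝ) + 1)
  rw [integral_Ioi_of_hasDerivAt_of_tendsto' hderiv
    (integrable_mul_tailIntegral_pow hκ hκc hκ₀ n).integrableOn hlim]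
  ring

end TailIntegral

section Volterra

variable {E : Type*} [NormedAddCommGroup E] [NormedSpace ℂ E] {K : ℝ → ℝ → ℂ} {κ : ℝ → ℝ}

noncomputable def volterraOp (f : ℝ → E) (K : ℝ → ℝ → ℂ) (φ : ℝ → E) (x : ℝ) : E :=
  f x + ∫ y in Ioi x, K x y • φ y

lemma volterraOp_congr_of_eqOn_Ici {a : ℝ} (hK : ∀ x y, y < a → K x y = 0) (f : ℝ → E)
    {φ ψ : ℝ → E} (h : EqOn φ ψ (Ici a)) : volterraOp f K φ = volterraOp f K ψ := by
  ext x
  refine congrArg (f x + ·) (setIntegral_congr_fun measurableSet_Ioi fun y _ => ?_)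
  rcases lt_or_ge y a with hy | hy
  · simp only [hK x y hy, zero_smul]
  · rw [h hy]

structure IsVolterraKernel (K : ℝ → ℝ → ℂ) (κ : ℝ → ℝ) : Prop where
  aestronglyMeasurable : ∀ x, AEStronglyMeasurable (K x)
  continuous_left : ∀ y, Continuous fun x => K x y
  norm_le : ∀ ⦃x y⦄, x ≤ y → ‖K x y‖ ≤ κ y
  integrable : Integrable κ
  continuous : Continuous κ

namespace IsVolterraKernel

variable (hK : IsVolterraKernel K κ)
include hK

lemma nonneg : 0 ≤ κ := fun _ => (norm_nonneg _).trans (hK.norm_le le_rfl)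

lemma norm_smul_le {x y : ℝ} (hxy : x ≤ y) {u : E} {b : ℝ} (hu : ‖u‖ ≤ b) :
    ‖K x y • u‖ ≤ κ y * b := by
  rw [norm_smul]
  exact mul_le_mul (hK.norm_le hxy) hu (norm_nonneg _) (hK.nonneg y)

lemma integrableOn_smul {φ : ℝ → E} (hφ : AEStronglyMeasurable φ) {B : ℝ} (hB : ∀ y, ‖φ y‖ ≤ B)
    (x : ℝ) : IntegrableOn (fun y => K x y • φ y) (Ioi x) :=
  (hK.integrable.mul_const B).integrableOn.mono' ((hK.aestronglyMeasurable x).smul hφ).restrict <|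
    (ae_restrict_mem measurableSet_Ioi).mono fun y hy => hK.norm_smul_le hy.out.le (hB y)

lemma norm_integral_smul_le {φ : ℝ → E} {g : ℝ → ℝ} {x : ℝ}
    (hg : IntegrableOn (fun y => κ y * g y) (Ioi x)) (hφ : ∀ y, x < y → ‖φ y‖ ≤ g y) :
    ‖∫ y in Ioi x, K x y • φ y‖ ≤ ∫ y in Ioi x, κ y * g y :=
  norm_integral_le_of_norm_le hg <|
    (ae_restrict_mem measurableSet_Ioi).mono fun y hy => hK.norm_smul_le hy.out.le (hφ y hy)

lemma continuous_integral_smul {φ : ℝ → E} (hφ : AEStronglyMeasurable φ) {B : ℝ}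
    (hB : ∀ y, ‖φ y‖ ≤ B) : Continuous fun x => ∫ y in Ioi x, K x y • φ y := by
  simp_rw [← integral_indicator measurableSet_Ioi]
  refine continuous_iff_continuousAt.2 fun x₀ => continuousAt_of_dominated
    (bound := fun y => κ y * B) (.of_forall fun x =>
      ((hK.aestronglyMeasurable x).smul hφ).indicator measurableSet_Ioi)
    (.of_forall fun x => .of_forall fun y => ?_) (hK.integrable.mul_const B) ?_
  · by_cases hy : y ∈ Ioi x
    · rw [indicator_of_mem hy]
      exact hK.norm_smul_le hy.out.le (hB y)
    · rw [indicator_of_notMem hy, norm_zero]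
      exact mul_nonneg (hK.nonneg y) ((norm_nonneg _).trans (hB y))
  -- off the null set `{x₀}`, the integrand is locally `0` or locally `x ↦ K x y • φ y`
  · filter_upwards [compl_mem_ae_iff.2 (measure_singleton x₀)] with y (hy : y ≠ x₀)
    rcases hy.lt_or_gt with hlt | hgt
    · refine (continuousAt_const (y := (0 : E))).congr
        (eventually_gt_nhds hlt |>.mono fun x hx => ?_)
      exact (indicator_of_notMem (not_lt.2 hx.le) _).symm
    · refine ((hK.continuous_left y).smul (continuous_const (y := φ y))).continuousAt.congr
        (eventually_lt_nhds hgt |>.mono fun x hx => ?_)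
      exact (indicator_of_mem (s := Ioi x) hx (fun y => K x y • φ y)).symm

lemma norm_volterraOp_le (f φ : ℝ →ᵇ E) (x : ℝ) :
    ‖volterraOp f K φ x‖ ≤ ‖f‖ + (∫ y, κ y) * ‖φ‖ :=
  calc ‖volterraOp f K φ x‖ ≤ ‖f x‖ + ‖∫ y in Ioi x, K x y • φ y‖ := norm_add_le _ _
    _ ≤ ‖f‖ + ∫ y in Ioi x, κ y * ‖φ‖ := add_le_add (f.norm_coe_le_norm x) <|
      hK.norm_integral_smul_le (hK.integrable.mul_const _).integrableOn fun y _ =>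
        φ.norm_coe_le_norm y
    _ ≤ ‖f‖ + (∫ y, κ y) * ‖φ‖ := by
      rw [← integral_mul_const]
      exact add_le_add_right (setIntegral_le_integral (hK.integrable.mul_const _)
        (.of_forall fun y => mul_nonneg (hK.nonneg y) (norm_nonneg φ))) _

noncomputable def op (f φ : ℝ →ᵇ E) : ℝ →ᵇ E :=
  .ofNormedAddCommGroup (volterraOp f K φ)
    (f.continuous.add <|
      hK.continuous_integral_smul φ.continuous.aestronglyMeasurable φ.norm_coe_le_norm)
    _ (hK.norm_volterraOp_le f φ)

lemma coe_op (f φ : ℝ →ᵇ E) : ⇑(hK.op f φ) = volterraOp f K φ := rfl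

lemma dist_iterate_op_apply_le (f φ ψ : ℝ →ᵇ E) (n : ℕ) (x : ℝ) :
    dist ((hK.op f)^[n] φ x) ((hK.op f)^[n] ψ x) ≤
      tailIntegral κ x ^ n / n.factorial * dist φ ψ := by
  induction n generalizing x with
  | zero => simpa using φ.dist_coe_le_dist x
  | succ n ih =>
    set A := (hK.op f)^[n] φ
    set B := (hK.op f)^[n] ψ
    rw [Function.iterate_succ_apply', Function.iterate_succ_apply', dist_eq_norm, coe_op, coe_op,
      volterraOp, volterraOp, add_sub_add_left_eq_sub,
      ← integral_sub (hK.integrableOn_smul A.continuous.aestronglyMeasurable A.norm_coe_le_norm x)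
        (hK.integrableOn_smul B.continuous.aestronglyMeasurable B.norm_coe_le_norm x)]
    simp_rw [← smul_sub]
    have hκσ := integrable_mul_tailIntegral_pow hK.integrable hK.continuous hK.nonneg n
    calc _ ≤ ∫ y in Ioi x, κ y * (tailIntegral κ y ^ n / n.factorial * dist φ ψ) :=
          hK.norm_integral_smul_le
            ((hκσ.mul_const (dist φ ψ / n.factorial)).integrableOn.congr_fun
              (fun y _ => by ring) measurableSet_Ioi)
            fun y _ => (dist_eq_norm _ _).symm.trans_le (ih y)
      _ = (∫ y in Ioi x, κ y * tailIntegral κ y ^ n) * (dist φ ψ / n.factorial) := by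
          rw [← integral_mul_const]
          congr 1 with y
          ring
      _ = tailIntegral κ x ^ (n + 1) / (n + 1).factorial * dist φ ψ := by
          rw [integral_mul_tailIntegral_pow hK.integrable hK.continuous hK.nonneg,
            Nat.factorial_succ]
          push_cast
          field_simp

lemma exists_contractingWith_iterate_op (f : ℝ →ᵇ E) :
    ∃ (n : ℕ) (C : NNReal), ContractingWith C (hK.op f)^[n] := by
  set M := ∫ y, κ y
  obtain ⟨n, hn⟩ := (FloorSemiring.tendsto_pow_div_factorial_atTop M).eventually
    (gt_mem_nhds zero_lt_one) |>.exists
  have hM : 0 ≤ M := integral_nonneg hK.nonneg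
  have hC : 0 ≤ M ^ n / n.factorial := by positivity
  refine ⟨n, ⟨_, hC⟩, hn, LipschitzWith.of_dist_le_mul fun φ ψ => ?_⟩
  refine (dist_le (mul_nonneg hC dist_nonneg)).2 fun x =>
    (hK.dist_iterate_op_apply_le f φ ψ n x).trans ?_
  have hσ₀ := tailIntegral_nonneg hK.nonneg x
  have hσM := tailIntegral_le_integral hK.integrable hK.nonneg x
  gcongr

theorem exists_fixedPoint_eqOn_Ici [CompleteSpace E] {a : ℝ} (hK₀ : ∀ x y, y < a → K x y = 0)
    (f : ℝ →ᵇ E) :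
    ∃ φ : ℝ →ᵇ E, volterraOp f K φ = φ ∧
      ∀ ψ : ℝ →ᵇ E, EqOn (volterraOp f K ψ) ψ (Ici a) → EqOn ψ φ (Ici a) := by
  obtain ⟨n, C, hC⟩ := hK.exists_contractingWith_iterate_op f
  have hfix : Function.IsFixedPt (hK.op f) _ := hC.isFixedPt_fixedPoint_iterate
  refine ⟨_, congrArg DFunLike.coe hfix, fun ψ hψ x hx => ?_⟩
  -- `op f ψ` agrees with `ψ` on `[a, ∞)`, which is all that `volterraOp f K` sees
  have hψfix : Function.IsFixedPt (hK.op f) (hK.op f ψ) :=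
    DFunLike.coe_injective (volterraOp_congr_of_eqOn_Ici hK₀ f hψ)
  rw [← hψ hx, ← hK.coe_op, hC.fixedPoint_unique (hψfix.iterate n)]

end IsVolterraKernel

end Volterra

lemma Complex.norm_sin_le_exp_abs_im (z : ℂ) : ‖Complex.sin z‖ ≤ Real.exp |z.im| := by
  have hexp : ∀ w : ℂ, w.re ≤ |z.im| → ‖Complex.exp w‖ ≤ Real.exp |z.im| := fun w hw => by
    rw [Complex.norm_exp]
    exact Real.exp_le_exp.2 hw
  have h₁ := hexp (-z * Complex.I) (by simpa using le_abs_self z.im)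
  have h₂ := hexp (z * Complex.I) (by simpa using neg_le_abs z.im)
  have h₃ := norm_sub_le (Complex.exp (-z * Complex.I)) (Complex.exp (z * Complex.I))
  rw [Complex.sin, norm_div, norm_mul, Complex.norm_I, mul_one, Complex.norm_two]
  linarith

lemma BoundedContinuousFunction.exists_eqOn_Ici {E : Type*} [NormedAddCommGroup E] {u : ℝ → E}
    {a M : ℝ} (hu : ContinuousOn u (Ici a)) (hM : ∀ x, a ≤ x → ‖u x‖ ≤ M) :
    ∃ g : ℝ →ᵇ E, EqOn g u (Ici a) :=
  ⟨.ofNormedAddCommGroup (fun x => u (max x a))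
    (hu.comp_continuous (by fun_prop) fun x => le_max_right x a) M fun x => hM _ (le_max_right x a),
    fun x hx => by simp [max_eq_left hx.out]⟩

lemma Complex.ofReal_exp_neg_mul_cancel (a : ℝ) (z : ℂ) :
    (Real.exp (-a) : ℂ) * (Real.exp a * z) = z := by
  rw [← mul_assoc, ← Complex.ofReal_mul, ← Real.exp_add, neg_add_cancel, Real.exp_zero,
    Complex.ofReal_one, one_mul]

lemma Complex.norm_ofReal_exp_mul (a : ℝ) (z : ℂ) : ‖(Real.exp a : ℂ) * z‖ = Real.exp a * ‖z‖ := by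
  rw [norm_mul, Complex.norm_real, Real.norm_of_nonneg (Real.exp_pos a).le]

section Jost

variable {v : ℝ → ℝ} {ζ : ℂ}

/-- The kernel of the Jost equation for `e^{Im(ζ) x} θ(x)`, with `v` cut off to `[0, ∞)`. -/
noncomputable def jostKernel (v : ℝ → ℝ) (ζ : ℂ) (x y : ℝ) : ℂ :=
  (Real.exp (ζ.im * (x - y)) : ℂ) * ζ⁻¹ * Complex.sin (ζ * (x - y)) * ((Ici 0).indicator v y : ℝ)

lemma jostKernel_of_neg {x y : ℝ} (hy : y < 0) : jostKernel v ζ x y = 0 := by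
  simp [jostKernel, hy.not_ge]

lemma norm_jostKernel_le (hζ : 0 ≤ ζ.im) {x y : ℝ} (hxy : x ≤ y) :
    ‖jostKernel v ζ x y‖ ≤ ‖ζ‖⁻¹ * |(Ici 0).indicator v y| := by
  have hsin : ‖Complex.sin (ζ * (x - y))‖ ≤ Real.exp (ζ.im * (y - x)) := by
    refine (Complex.norm_sin_le_exp_abs_im _).trans_eq ?_
    simp only [Complex.mul_im, Complex.sub_re, Complex.sub_im, Complex.ofReal_re,
      Complex.ofReal_im, sub_zero, mul_zero, zero_add]
    rw [abs_of_nonpos (mul_nonpos_of_nonneg_of_nonpos hζ (sub_nonpos.2 hxy))]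
    ring_nf
  calc ‖jostKernel v ζ x y‖
      = Real.exp (ζ.im * (x - y)) * ‖ζ‖⁻¹ * ‖Complex.sin (ζ * (x - y))‖ *
          |(Ici 0).indicator v y| := by
        simp only [jostKernel, norm_mul, norm_inv, Complex.norm_real, Real.norm_eq_abs,
          Real.abs_exp]
    _ ≤ Real.exp (ζ.im * (x - y)) * ‖ζ‖⁻¹ * Real.exp (ζ.im * (y - x)) *
          |(Ici 0).indicator v y| := by gcongr
    _ = ‖ζ‖⁻¹ * |(Ici 0).indicator v y| := by
        rw [mul_right_comm _ _ (Real.exp _), ← Real.exp_add]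
        ring_nf
        rw [Real.exp_zero, one_mul]

lemma isVolterraKernel_jostKernel (hv_meas : Measurable v) {C₀ ρ : ℝ} (hC₀ : 0 ≤ C₀) (hρ : 1 < ρ)
    (hv : ∀ x : ℝ, 0 ≤ x → |v x| ≤ C₀ * (1 + x) ^ (-ρ)) (hζ : 0 ≤ ζ.im) :
    IsVolterraKernel (jostKernel v ζ) fun y => ‖ζ‖⁻¹ * (C₀ * (1 + ‖y‖) ^ (-ρ)) where
  aestronglyMeasurable x := by
    have := hv_meas.indicator (measurableSet_Ici (a := (0 : ℝ)))
    unfold jostKernel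
    fun_prop
  continuous_left y := by
    unfold jostKernel
    fun_prop
  norm_le x y hxy := by
    refine (norm_jostKernel_le hζ hxy).trans (mul_le_mul_of_nonneg_left ?_ (by positivity))
    rcases lt_or_ge y 0 with hy | hy
    · rw [indicator_of_notMem (show y ∉ Ici 0 from not_le.2 hy), abs_zero]
      positivity
    · rw [indicator_of_mem (show y ∈ Ici 0 from hy), Real.norm_of_nonneg hy]
      exact hv y hy
  integrable := ((integrable_one_add_norm (by simpa using hρ)).const_mul C₀).const_mul _
  continuous := continuous_const.mul <| continuous_const.mul <|
    (continuous_const.add continuous_norm).rpow_const fun y =>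
      .inl (by positivity : (0 : ℝ) < 1 + ‖y‖).ne'

noncomputable def jostForcing (ζ : ℂ) : ℝ →ᵇ ℂ :=
  .ofNormedAddCommGroup (fun x => (Real.exp (ζ.im * x) : ℂ) * Complex.exp (Complex.I * ζ * x))
    (by fun_prop) 1 fun x => by
      rw [norm_mul, Complex.norm_real, Real.norm_of_nonneg (Real.exp_pos _).le, Complex.norm_exp,
        ← Real.exp_add]
      simp

lemma volterraOp_jost {x : ℝ} (hx : 0 ≤ x) (θ : ℝ → ℂ) :
    volterraOp (jostForcing ζ) (jostKernel v ζ) (fun y => (Real.exp (ζ.im * y) : ℂ) * θ y) x =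
      Real.exp (ζ.im * x) * (Complex.exp (Complex.I * ζ * x) +
        ζ⁻¹ * ∫ y in Ioi x, Complex.sin (ζ * ((x : ℂ) - (y : ℂ))) * (v y : ℂ) * θ y) := by
  have hpt : ∀ y ∈ Ioi x, jostKernel v ζ x y • ((Real.exp (ζ.im * y) : ℂ) * θ y) =
      Real.exp (ζ.im * x) * (ζ⁻¹ * (Complex.sin (ζ * (x - y)) * v y * θ y)) := fun y hy => by
    have hexp : Real.exp (ζ.im * (x - y)) * Real.exp (ζ.im * y) = Real.exp (ζ.im * x) := by
      rw [← Real.exp_add]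
      ring_nf
    rw [smul_eq_mul, jostKernel, indicator_of_mem (show y ∈ Ici 0 from hx.trans hy.out.le), ← hexp]
    push_cast
    ring
  rw [volterraOp, setIntegral_congr_fun measurableSet_Ioi hpt, integral_const_mul,
    integral_const_mul, mul_add]
  rfl

end Jost

theorem jost_solution_exists_unique_general
    (v : ℝ → ℝ) (hv_meas : Measurable v) (C₀ ρ : ℝ)
    (hC₀ : 0 < C₀) (hρ : 2 < ρ)
    (hv : ∀ x : ℝ, 0 ≤ x → |v x| ≤ C₀ * (1 + x) ^ (-ρ))
    (ζ : ℂ) (hζim : 0 ≤ ζ.im) :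
    ∃ θ : ℝ → ℂ,
      (ContinuousOn θ (Set.Ici 0) ∧
        (∃ M : ℝ, ∀ x : ℝ, 0 ≤ x → Real.exp (ζ.im * x) * ‖θ x‖ ≤ M) ∧
        ∀ x : ℝ, 0 ≤ x →
          θ x = Complex.exp (Complex.I * ζ * x) +
            ζ⁻¹ * ∫ y in Set.Ioi x, Complex.sin (ζ * ((x : ℂ) - (y : ℂ))) * (v y : ℂ) * θ y) ∧
      ∀ θ' : ℝ → ℂ,
        ContinuousOn θ' (Set.Ici 0) →
        (∃ M : ℝ, ∀ x : ℝ, 0 ≤ x → Real.exp (ζ.im * x) * ‖θ' x‖ ≤ M) →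
        (∀ x : ℝ, 0 ≤ x →
          θ' x = Complex.exp (Complex.I * ζ * x) +
            ζ⁻¹ * ∫ y in Set.Ioi x, Complex.sin (ζ * ((x : ℂ) - (y : ℂ))) * (v y : ℂ) * θ' y) →
        Set.EqOn θ' θ (Set.Ici 0) := by
  obtain ⟨φ, hφ, hφ_unique⟩ := (isVolterraKernel_jostKernel hv_meas hC₀.le (by linarith) hv
    hζim).exists_fixedPoint_eqOn_Ici (fun _ _ => jostKernel_of_neg) (jostForcing ζ)
  set θ : ℝ → ℂ := fun x => (Real.exp (-(ζ.im * x)) : ℂ) * φ x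
  have hθ : (fun y => (Real.exp (ζ.im * y) : ℂ) * θ y) = φ := by
    ext y
    simpa only [neg_neg] using Complex.ofReal_exp_neg_mul_cancel (-(ζ.im * y)) (φ y)
  refine ⟨θ, ⟨by fun_prop, ⟨‖φ‖, fun x _ => ?_⟩, fun x hx => ?_⟩, fun θ' hθ'c ⟨M, hM⟩ hθ' => ?_⟩
  · simpa only [← congrFun hθ x, Complex.norm_ofReal_exp_mul] using φ.norm_coe_le_norm x
  · rw [← mul_right_inj' (Complex.ofReal_ne_zero.2 (Real.exp_pos (ζ.im * x)).ne'),
      ← volterraOp_jost hx, hθ, hφ]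
    exact congrFun hθ x
  · obtain ⟨ψ, hψ⟩ := BoundedContinuousFunction.exists_eqOn_Ici
      (u := fun x => (Real.exp (ζ.im * x) : ℂ) * θ' x) (by fun_prop) fun x hx => by
        simpa only [Complex.norm_ofReal_exp_mul] using hM x hx
    have hψφ := hφ_unique ψ fun x hx => by
      rw [volterraOp_congr_of_eqOn_Ici (fun _ _ => jostKernel_of_neg) _ hψ, hψ hx,
        volterraOp_jost hx, ← hθ' x hx]
    intro x hx
    rw [← Complex.ofReal_exp_neg_mul_cancel (ζ.im * x) (θ' x)]
    exact congrArg _ ((hψ hx).symm.trans (hψφ hx))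

/-- Existence and uniqueness of the Jost solution of the Volterra integral
equation `θ(x) = e^{iζx} + ζ⁻¹ ∫ₓ^∞ sin(ζ(x−y)) v(y) θ(y) dy` among continuous
functions on `[0,∞)` with `sup_{x ≥ 0} e^{Im(ζ)x} |θ(x)| < ∞`. -/
theorem jost_solution_exists_unique
    (v : ℝ → ℝ) (hv_meas : Measurable v) (C₀ ρ : ℝ)
    (hC₀ : 0 < C₀) (hρ : 2 < ρ)
    (hv : ∀ x : ℝ, 0 ≤ x → |v x| ≤ C₀ * (1 + x) ^ (-ρ))
    (ζ : ℂ) (hζim : 0 ≤ ζ.im) (hζ : ζ ≠ 0) :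
    ∃ θ : ℝ → ℂ,
      (ContinuousOn θ (Set.Ici 0) ∧
        (∃ M : ℝ, ∀ x : ℝ, 0 ≤ x → Real.exp (ζ.im * x) * ‖θ x‖ ≤ M) ∧
        ∀ x : ℝ, 0 ≤ x →
          θ x = Complex.exp (Complex.I * ζ * x) +
            ζ⁻¹ * ∫ y in Set.Ioi x, Complex.sin (ζ * ((x : ℂ) - (y : ℂ))) * (v y : ℂ) * θ y) ∧
      ∀ θ' : ℝ → ℂ,
        ContinuousOn θ' (Set.Ici 0) →
        (∃ M : ℝ, ∀ x : ℝ, 0 ≤ x → Real.exp (ζ.im * x) * ‖θ' x‖ ≤ M) →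
        (∀ x : ℝ, 0 ≤ x →
          θ' x = Complex.exp (Complex.I * ζ * x) +
            ζ⁻¹ * ∫ y in Set.Ioi x, Complex.sin (ζ * ((x : ℂ) - (y : ℂ))) * (v y : ℂ) * θ' y) →
        Set.EqOn θ' θ (Set.Ici 0) :=
  jost_solution_exists_unique_general v hv_meas C₀ ρ hC₀ hρ hv ζ hζim
end

section
/- There exists C > 0 such that for all ζ ∈ ℂ with Im ζ ≥ 0, ζ ≠ 0, and all x ≥ 0, one has |p(x,ζ)| ≤ e^{−Im(ζ)x} ( exp( C ∫ₓ^∞ y|v(y)| dy ) − 1 ); consequently there exists C' > 0 with |p(x,ζ)| ≤ C' ∫ₓ^∞ y|v(y)| dy for all such ζ and x, and for each fixed x ≥ 0 the limit of θ(x,ζ) as ζ → 0 with Im ζ ≥ 0 exists, so that θ(x,·) extends continuously to ζ = 0. -/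
/-!
Put `m(x) = e^{Im ζ x} |θ(x,ζ) - e^{iζx}|`. Since `|ζ⁻¹ sin ζt| ≤ t e^{Im ζ t}` for `t ≥ 0`, the
weight `e^{Im ζ x}` absorbs the growth of the kernel, and the Jost equation yields the backward
Volterra inequality `1 + m(x) ≤ 1 + ∫ₓ^∞ y |v(y)| (1 + m(y)) dy`. Gronwall's inequality turns it into
`1 + m(x) ≤ exp (2 ∫ₓ^∞ y |v(y)| dy)`, uniformly in `ζ`; this gives both estimates, and the
estimate `e^t - 1 ≤ t e^t` passes from the first to the second.

For the limit `ζ → 0`, cut `[0, ∞)` at a large `R`. On `[0, R]`, for `|ζ₁|, |ζ₂| ≤ δ ≤ 1 / R`, the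
difference `θ(·,ζ₁) - θ(·,ζ₂)` satisfies a Volterra inequality of the same kind whose source term is
`O(δ R) + O(δ² R³) + O(∫_R^∞ y |v(y)| dy)`, by `|e^{iζx} - 1| ≤ |ζ| x`,
`|ζ⁻¹ sin ζt - t| ≤ |ζ|² t³ e^{Im ζ t}` and the uniform bound on `e^{Im ζ x} |θ(x,ζ)|`.
Hence `θ(x,·)` is Cauchy at `0`.
-/

open MeasureTheory Set Filter

namespace Complex

lemma norm_cos_le_exp_abs_im (z : ℂ) : ‖cos z‖ ≤ Real.exp |z.im| := by
  have h₁ : ‖exp (z * I)‖ ≤ Real.exp |z.im| := by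
    rw [norm_exp]; exact Real.exp_le_exp.2 (by simpa using neg_le_abs z.im)
  have h₂ : ‖exp (-z * I)‖ ≤ Real.exp |z.im| := by
    rw [norm_exp]; exact Real.exp_le_exp.2 (by simpa using le_abs_self z.im)
  calc ‖cos z‖ = ‖exp (z * I) + exp (-z * I)‖ / 2 := by
        rw [cos, norm_div, RCLike.norm_ofNat]
    _ ≤ Real.exp |z.im| := by linarith [norm_add_le (exp (z * I)) (exp (-z * I))]

lemma convex_closedBall_inter_abs_im_le (z : ℂ) :
    Convex ℝ (Metric.closedBall 0 ‖z‖ ∩ {w : ℂ | |w.im| ≤ |z.im|}) := by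
  refine (convex_closedBall _ _).inter ?_
  simpa [abs_le, ofPred_and] using
    (convex_halfSpace_ge (f := fun w : ℂ => w.im) imLm.isLinear (-|z.im|)).inter
      (convex_halfSpace_le (f := fun w : ℂ => w.im) imLm.isLinear |z.im|)

lemma norm_sub_apply_zero_le_of_norm_deriv_le {f : ℂ → ℂ} (z : ℂ) {C : ℝ}
    (hf : Differentiable ℂ f) (bound : ∀ w : ℂ, ‖w‖ ≤ ‖z‖ → |w.im| ≤ |z.im| → ‖deriv f w‖ ≤ C) :
    ‖f z - f 0‖ ≤ C * ‖z‖ := by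
  simpa using (convex_closedBall_inter_abs_im_le z).norm_image_sub_le_of_norm_deriv_le
    (fun w _ => hf w) (fun w hw => bound w (by simpa using hw.1) hw.2)
    (x := 0) (y := z) (by simp) (by simp)

lemma norm_sin_le (z : ℂ) : ‖sin z‖ ≤ ‖z‖ * Real.exp |z.im| := by
  have := norm_sub_apply_zero_le_of_norm_deriv_le z differentiable_sin fun w _ hw =>
    (deriv_sin ▸ norm_cos_le_exp_abs_im w).trans (Real.exp_le_exp.2 hw)
  simpa [mul_comm] using this

lemma norm_cos_sub_one_le (z : ℂ) : ‖cos z - 1‖ ≤ ‖z‖ ^ 2 * Real.exp |z.im| := by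
  have := norm_sub_apply_zero_le_of_norm_deriv_le z differentiable_cos fun w hw hw' => by
    rw [deriv_cos', norm_neg]
    exact (norm_sin_le w).trans
      (mul_le_mul hw (Real.exp_le_exp.2 hw') (by positivity) (norm_nonneg z))
  simpa [sq, mul_comm, mul_left_comm, mul_assoc] using this

lemma norm_sin_sub_self_le (z : ℂ) : ‖sin z - z‖ ≤ ‖z‖ ^ 3 * Real.exp |z.im| := by
  have := norm_sub_apply_zero_le_of_norm_deriv_le z (f := fun w => sin w - w)
    (differentiable_sin.sub differentiable_id) fun w hw hw' => by
    rw [((hasDerivAt_sin w).fun_sub (hasDerivAt_id' w)).deriv]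
    exact (norm_cos_sub_one_le w).trans (mul_le_mul (pow_le_pow_left₀ (norm_nonneg w) hw 2)
      (Real.exp_le_exp.2 hw') (by positivity) (by positivity))
  calc ‖sin z - z‖ ≤ ‖z‖ ^ 2 * Real.exp |z.im| * ‖z‖ := by simpa using this
    _ = ‖z‖ ^ 3 * Real.exp |z.im| := by ring

lemma norm_exp_sub_one_le_of_re_nonpos {z : ℂ} (hz : z.re ≤ 0) : ‖exp z - 1‖ ≤ ‖z‖ := by
  have hs : Convex ℝ {w : ℂ | w.re ≤ 0} :=
    convex_halfSpace_le (f := fun w : ℂ => w.re) reLm.isLinear 0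
  simpa using hs.norm_image_sub_le_of_norm_deriv_le (f := exp) (C := 1)
    (fun w _ => differentiableAt_exp) (fun w hw => by simpa [deriv_exp, norm_exp] using hw)
    (x := 0) (y := z) (by simp) hz

end Complex

lemma Real.exp_sub_one_le_mul_exp (t : ℝ) : Real.exp t - 1 ≤ t * Real.exp t := by
  have h := Real.add_one_le_exp (-t)
  have h1 : Real.exp (-t) * Real.exp t = 1 := by rw [← Real.exp_add, neg_add_cancel, Real.exp_zero]
  nlinarith [Real.exp_pos t]

lemma le_of_exp_mul_le {t a B : ℝ} (ht : 0 ≤ t) (ha : 0 ≤ a) (h : Real.exp t * a ≤ B) : a ≤ B :=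
  (le_mul_of_one_le_left ha (Real.one_le_exp ht)).trans h

lemma integrableOn_Ioi_zero_of_abs_le_rpow {u : ℝ → ℝ} (hu : Measurable u) {C r : ℝ} (hr : 1 < r)
    (hle : ∀ x, 0 ≤ x → |u x| ≤ C * (1 + x) ^ (-r)) : IntegrableOn u (Ioi 0) := by
  refine Integrable.mono' ((integrable_one_add_norm (by simpa using hr)).const_mul C).integrableOn
    hu.aestronglyMeasurable ((ae_restrict_iff' measurableSet_Ioi).2 (.of_forall fun x hx => ?_))
  rw [Real.norm_eq_abs, Real.norm_of_nonneg (le_of_lt hx)]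
  exact hle x (le_of_lt hx)

lemma integrableOn_Ioi_zero_mul_abs_of_abs_le_rpow {u : ℝ → ℝ} (hu : Measurable u) {C ρ : ℝ}
    (hρ : 2 < ρ) (hle : ∀ x, 0 ≤ x → |u x| ≤ C * (1 + x) ^ (-ρ)) :
    IntegrableOn (fun x => x * |u x|) (Ioi 0) := by
  refine integrableOn_Ioi_zero_of_abs_le_rpow (C := C) (r := ρ - 1)
    (measurable_id.mul hu.abs) (by linarith) fun x hx => ?_
  have h1 : (0 : ℝ) < 1 + x := by linarith
  rw [abs_of_nonneg (mul_nonneg hx (abs_nonneg _))]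
  calc x * |u x| ≤ (1 + x) * |u x| := by gcongr; linarith
    _ ≤ (1 + x) * (C * (1 + x) ^ (-ρ)) := by gcongr; exact hle x hx
    _ = C * (1 + x) ^ (-(ρ - 1)) := by
        rw [show -(ρ - 1) = -ρ + 1 by ring, Real.rpow_add_one h1.ne']; ring

lemma tendsto_setIntegral_Ioi_atTop {f : ℝ → ℝ} {x₀ : ℝ} (hf : IntegrableOn f (Ioi x₀)) :
    Tendsto (fun x => ∫ y in Ioi x, f y) atTop (nhds 0) := by
  have hempty : ⋂ x : ℝ, Ioi x = ∅ :=
    eq_empty_of_forall_notMem fun y hy => lt_irrefl y (mem_iInter.1 hy y)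
  simpa [hempty] using tendsto_setIntegral_of_antitone (fun x => measurableSet_Ioi)
    (fun _ _ h => Ioi_subset_Ioi h) ⟨x₀, hf⟩

section Gronwall

variable {g F : ℝ → ℝ} {a x₀ : ℝ}

lemma setIntegral_mul_le_mul_add_setIntegral_mul
    (hg0 : ∀ y ∈ Ioi x₀, 0 ≤ g y) (hF0 : ∀ y ∈ Ici x₀, 0 ≤ F y)
    (hg : IntegrableOn g (Ioi x₀)) (hgF : IntegrableOn (fun y => g y * F y) (Ioi x₀))
    (hF : ∀ y ∈ Ici x₀, F y ≤ a + ∫ z in Ioi y, g z * F z)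
    {x : ℝ} (hx : x₀ ≤ x) {s : Set ℝ} (hs : MeasurableSet s) (hsx : s ⊆ Ioi x) :
    ∫ y in s, g y * F y ≤ (∫ y in s, g y) * (a + ∫ y in Ioi x, g y * F y) := by
  have hsub : s ⊆ Ioi x₀ := hsx.trans (Ioi_subset_Ioi hx)
  rw [← integral_mul_const]
  refine setIntegral_mono_on (hgF.mono_set hsub) ((hg.mono_set hsub).mul_const _) hs
    fun y hy => mul_le_mul_of_nonneg_left ?_ (hg0 y (hsub hy))
  refine (hF y (mem_Ici_of_Ioi (hsub hy))).trans (add_le_add le_rfl ?_)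
  exact setIntegral_mono_set (hgF.mono_set (Ioi_subset_Ioi hx))
    ((ae_restrict_iff' measurableSet_Ioi).2 (.of_forall fun z hz =>
      mul_nonneg (hg0 z (hx.trans_lt hz)) (hF0 z (mem_Ici_of_Ioi (hx.trans_lt hz)))))
    (Ioi_subset_Ioi (hsx hy).le).eventuallyLE

lemma add_setIntegral_mul_le_mul_exp_of_setIntegral_le_half
    (hg0 : ∀ y ∈ Ioi x₀, 0 ≤ g y) (hF0 : ∀ y ∈ Ici x₀, 0 ≤ F y)
    (hg : IntegrableOn g (Ioi x₀)) (hgF : IntegrableOn (fun y => g y * F y) (Ioi x₀))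
    (hF : ∀ y ∈ Ici x₀, F y ≤ a + ∫ z in Ioi y, g z * F z)
    {x : ℝ} (hx : x₀ ≤ x) (hhalf : ∫ y in Ioi x, g y ≤ 1 / 2) :
    a + ∫ y in Ioi x, g y * F y ≤ a * Real.exp (2 * ∫ y in Ioi x, g y) := by
  have key := setIntegral_mul_le_mul_add_setIntegral_mul hg0 hF0 hg hgF hF hx
    measurableSet_Ioi subset_rfl
  have hG0 : 0 ≤ ∫ y in Ioi x, g y :=
    setIntegral_nonneg measurableSet_Ioi fun y hy => hg0 y (hx.trans_lt hy)
  have hΦ0 : 0 ≤ a + ∫ y in Ioi x, g y * F y := (hF0 x hx).trans (hF x hx)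
  have hexp := Real.add_one_le_exp (2 * ∫ y in Ioi x, g y)
  set G := ∫ y in Ioi x, g y
  set Φ := a + ∫ y in Ioi x, g y * F y
  have ha : Φ * (1 - G) ≤ a := by linarith
  nlinarith [mul_nonneg (mul_nonneg hG0 (by linarith : 0 ≤ 1 - 2 * G)) hΦ0,
    mul_le_mul_of_nonneg_right ha (by linarith : 0 ≤ 1 + 2 * G)]

lemma add_setIntegral_mul_le_two_mul_of_setIntegral_eq_add_half
    (hg0 : ∀ y ∈ Ioi x₀, 0 ≤ g y) (hF0 : ∀ y ∈ Ici x₀, 0 ≤ F y)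
    (hg : IntegrableOn g (Ioi x₀)) (hgF : IntegrableOn (fun y => g y * F y) (Ioi x₀))
    (hF : ∀ y ∈ Ici x₀, F y ≤ a + ∫ z in Ioi y, g z * F z)
    {x x' : ℝ} (hx : x₀ ≤ x) (hxx' : x ≤ x')
    (hhalf : ∫ y in Ioi x, g y = (∫ y in Ioi x', g y) + 1 / 2) :
    a + ∫ y in Ioi x, g y * F y ≤ 2 * (a + ∫ y in Ioi x', g y * F y) := by
  have hsplit (f : ℝ → ℝ) (hf : IntegrableOn f (Ioi x₀)) :
      ∫ y in Ioi x, f y = (∫ y in Ioc x x', f y) + ∫ y in Ioi x', f y := by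
    rw [← intervalIntegral.integral_of_le hxx',
      intervalIntegral.integral_interval_add_Ioi (hf.mono_set (Ioi_subset_Ioi hx))
        (hf.mono_set (Ioi_subset_Ioi (hx.trans hxx')))]
  have key := setIntegral_mul_le_mul_add_setIntegral_mul hg0 hF0 hg hgF hF hx
    measurableSet_Ioc (Ioc_subset_Ioi_self : Ioc x x' ⊆ Ioi x)
  have hG : ∫ y in Ioc x x', g y = 1 / 2 := by linarith [hsplit g hg]
  rw [hG] at key
  linarith [hsplit _ hgF]

/-- The proof cuts `[x, ∞)` into pieces on which `g` has mass `1 / 2`, each of which costs a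
factor `2 ≤ e`; this is where the `2` in the exponent comes from. -/
theorem le_mul_exp_of_le_add_setIntegral_mul
    (hg0 : ∀ y ∈ Ioi x₀, 0 ≤ g y) (hF0 : ∀ y ∈ Ici x₀, 0 ≤ F y)
    (hg : IntegrableOn g (Ioi x₀)) (hgF : IntegrableOn (fun y => g y * F y) (Ioi x₀))
    (hF : ∀ y ∈ Ici x₀, F y ≤ a + ∫ z in Ioi y, g z * F z) {x : ℝ} (hx : x₀ ≤ x) :
    F x ≤ a * Real.exp (2 * ∫ y in Ioi x, g y) := by
  set G : ℝ → ℝ := fun x => ∫ y in Ioi x, g y with hG_def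
  suffices ∀ n : ℕ, ∀ x ∈ Ici x₀, G x ≤ n / 2 →
      a + ∫ y in Ioi x, g y * F y ≤ a * Real.exp (2 * G x) by
    obtain ⟨n, hn⟩ := exists_nat_ge (2 * G x)
    exact (hF x hx).trans (this n x hx (by linarith))
  have small {x : ℝ} (hx : x₀ ≤ x) (h : G x ≤ 1 / 2) :=
    add_setIntegral_mul_le_mul_exp_of_setIntegral_le_half hg0 hF0 hg hgF hF hx h
  intro n
  induction n with
  | zero =>
    intro x hx hGx
    rw [Nat.cast_zero, zero_div] at hGx
    exact small hx (by linarith)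
  | succ n ih =>
    intro x hx hGx
    by_cases hhalf : G x ≤ 1 / 2
    · exact small hx hhalf
    obtain ⟨b, hxb, hb⟩ := ((eventually_ge_atTop x).and
      ((tendsto_setIntegral_Ioi_atTop hg).eventually
        (eventually_lt_nhds (by linarith : (0 : ℝ) < G x - 1 / 2)))).exists
    obtain ⟨x', ⟨hxx', -⟩, hx'⟩ := intermediate_value_Icc' hxb
      ((hg.continuousOn_Ici_primitive_Ioi).mono fun y hy => hx.trans hy.1) ⟨hb.le, by linarith⟩
    rw [← hG_def] at hx'
    have hx'₀ : x₀ ≤ x' := hx.trans hxx'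
    have hΦx' := ih x' hx'₀ (by push_cast at hGx; linarith)
    have hstep := add_setIntegral_mul_le_two_mul_of_setIntegral_eq_add_half hg0 hF0 hg hgF hF hx
      hxx' (by simp only [hG_def] at hx'; linarith)
    have hΦ0 : 0 ≤ a + ∫ y in Ioi x', g y * F y := (hF0 x' hx'₀).trans (hF x' hx'₀)
    have he : 2 * Real.exp (2 * G x') ≤ Real.exp (2 * G x) := by
      rw [show 2 * G x = 2 * G x' + 1 by linarith, Real.exp_add]
      nlinarith [Real.add_one_le_exp 1, Real.exp_pos (2 * G x')]
    have ha : 0 ≤ a := by nlinarith [Real.exp_pos (2 * G x')]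
    calc a + ∫ y in Ioi x, g y * F y ≤ 2 * (a * Real.exp (2 * G x')) := by linarith
      _ ≤ a * Real.exp (2 * G x) := by nlinarith

end Gronwall

section Kernel

open Complex

variable {ζ ζ₁ ζ₂ : ℂ} {x y z δ R : ℝ}

lemma norm_exp_I_mul (ζ : ℂ) (x : ℝ) : ‖exp (I * ζ * x)‖ = Real.exp (-(ζ.im * x)) := by
  simp [norm_exp, mul_re, mul_im]

lemma exp_mul_norm_le_one_add_exp_mul_norm_sub (ζ : ℂ) (w : ℂ) (x : ℝ) :
    Real.exp (ζ.im * x) * ‖w‖ ≤ 1 + Real.exp (ζ.im * x) * ‖w - exp (I * ζ * x)‖ := by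
  have h := norm_le_insert' w (exp (I * ζ * x))
  have h1 : Real.exp (ζ.im * x) * ‖exp (I * ζ * x)‖ = 1 := by
    rw [norm_exp_I_mul, ← Real.exp_add, add_neg_cancel, Real.exp_zero]
  nlinarith [Real.exp_pos (ζ.im * x)]

lemma norm_exp_I_mul_sub_one_le (hζ : 0 ≤ ζ.im) (hx : 0 ≤ x) :
    ‖exp (I * ζ * x) - 1‖ ≤ ‖ζ‖ * x := by
  refine (norm_exp_sub_one_le_of_re_nonpos ?_).trans_eq ?_
  · simpa [mul_re] using mul_nonneg hζ hx
  · simp [abs_of_nonneg hx]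

lemma norm_exp_I_mul_sub_exp_I_mul_le (hζ₁ : 0 ≤ ζ₁.im) (hζ₂ : 0 ≤ ζ₂.im) (hζ₁δ : ‖ζ₁‖ ≤ δ)
    (hζ₂δ : ‖ζ₂‖ ≤ δ) (hx : 0 ≤ x) (hxR : x ≤ R) :
    ‖exp (I * ζ₁ * x) - exp (I * ζ₂ * x)‖ ≤ 2 * δ * R := by
  have hδ : 0 ≤ δ := (norm_nonneg ζ₁).trans hζ₁δ
  rw [← sub_sub_sub_cancel_right _ _ 1]
  have h₁ := (norm_exp_I_mul_sub_one_le hζ₁ hx).trans (mul_le_mul hζ₁δ hxR hx hδ)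
  have h₂ := (norm_exp_I_mul_sub_one_le hζ₂ hx).trans (mul_le_mul hζ₂δ hxR hx hδ)
  linarith [norm_sub_le (exp (I * ζ₁ * x) - 1) (exp (I * ζ₂ * x) - 1)]

lemma norm_mul_ofReal_sub (ζ : ℂ) (hxy : x ≤ y) : ‖ζ * (x - y)‖ = ‖ζ‖ * (y - x) := by
  rw [norm_mul, ← ofReal_sub, norm_real, Real.norm_eq_abs, abs_of_nonpos (by linarith), neg_sub]

lemma abs_im_mul_ofReal_sub (hζ : 0 ≤ ζ.im) (hxy : x ≤ y) :
    |(ζ * (x - y)).im| = ζ.im * (y - x) := by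
  rw [← ofReal_sub, im_mul_ofReal,
    abs_of_nonpos (mul_nonpos_of_nonneg_of_nonpos hζ (by linarith)), ← mul_neg, neg_sub]

lemma norm_inv_mul_sin_le (hζ : 0 ≤ ζ.im) (hxy : x ≤ y) :
    ‖ζ⁻¹ * sin (ζ * (x - y))‖ ≤ (y - x) * Real.exp (ζ.im * (y - x)) := by
  rcases eq_or_ne ζ 0 with rfl | hζ0
  · simp only [inv_zero, zero_mul, norm_zero]
    exact mul_nonneg (by linarith) (Real.exp_pos _).le
  have := norm_sin_le (ζ * (x - y))
  rw [norm_mul_ofReal_sub ζ hxy, abs_im_mul_ofReal_sub hζ hxy] at this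
  rw [norm_mul, norm_inv]
  calc ‖ζ‖⁻¹ * ‖sin (ζ * (x - y))‖ ≤ ‖ζ‖⁻¹ * (‖ζ‖ * (y - x) * Real.exp (ζ.im * (y - x))) := by
        gcongr
    _ = (y - x) * Real.exp (ζ.im * (y - x)) := by field_simp

lemma norm_inv_mul_sin_sub_le (hζ0 : ζ ≠ 0) (hζ : 0 ≤ ζ.im) (hxy : x ≤ y) :
    ‖ζ⁻¹ * sin (ζ * (x - y)) - (x - y)‖ ≤ ‖ζ‖ ^ 2 * (y - x) ^ 3 * Real.exp (ζ.im * (y - x)) := by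
  have := norm_sin_sub_self_le (ζ * (x - y))
  rw [norm_mul_ofReal_sub ζ hxy, abs_im_mul_ofReal_sub hζ hxy] at this
  have hsplit : ζ⁻¹ * sin (ζ * (x - y)) - (x - y) = ζ⁻¹ * (sin (ζ * (x - y)) - ζ * (x - y)) := by
    field_simp
  rw [hsplit, norm_mul, norm_inv]
  calc ‖ζ‖⁻¹ * ‖sin (ζ * (x - y)) - ζ * (x - y)‖
      ≤ ‖ζ‖⁻¹ * ((‖ζ‖ * (y - x)) ^ 3 * Real.exp (ζ.im * (y - x))) := by gcongr
    _ = ‖ζ‖ ^ 2 * (y - x) ^ 3 * Real.exp (ζ.im * (y - x)) := by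
        field_simp [norm_ne_zero_iff.2 hζ0]

lemma exp_mul_norm_kernel_mul_le (hζ : 0 ≤ ζ.im) (hx : 0 ≤ x) (hxy : x ≤ y) (w : ℂ) :
    Real.exp (ζ.im * x) * ‖ζ⁻¹ * sin (ζ * (x - y)) * w‖ ≤ y * (Real.exp (ζ.im * y) * ‖w‖) := by
  rw [norm_mul]
  calc Real.exp (ζ.im * x) * (‖ζ⁻¹ * sin (ζ * (x - y))‖ * ‖w‖)
      ≤ Real.exp (ζ.im * x) * ((y - x) * Real.exp (ζ.im * (y - x)) * ‖w‖) := by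
        gcongr; exact norm_inv_mul_sin_le hζ hxy
    _ = (y - x) * (Real.exp (ζ.im * y) * ‖w‖) := by
        rw [← mul_assoc, ← mul_assoc, mul_comm _ (y - x), mul_assoc (y - x), ← Real.exp_add]
        ring_nf
    _ ≤ y * (Real.exp (ζ.im * y) * ‖w‖) := by gcongr; linarith

lemma norm_kernel_mul_le (hζ : 0 ≤ ζ.im) (hx : 0 ≤ x) (hxy : x ≤ y) (r : ℝ) {w : ℂ} {M : ℝ}
    (hM : Real.exp (ζ.im * y) * ‖w‖ ≤ M) :
    ‖ζ⁻¹ * sin (ζ * (x - y)) * (r * w)‖ ≤ M * (y * |r|) := by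
  have h := exp_mul_norm_kernel_mul_le hζ hx hxy (r * w)
  rw [norm_mul (r : ℂ), norm_real, Real.norm_eq_abs] at h
  refine le_of_exp_mul_le (mul_nonneg hζ hx) (norm_nonneg _) (h.trans ?_)
  calc y * (Real.exp (ζ.im * y) * (|r| * ‖w‖)) = y * |r| * (Real.exp (ζ.im * y) * ‖w‖) := by ring
    _ ≤ y * |r| * M := by gcongr; exact mul_nonneg (hx.trans hxy) (abs_nonneg _)
    _ = M * (y * |r|) := mul_comm _ _

lemma exp_im_mul_le_exp_one (hζδ : ‖ζ‖ ≤ δ) (hδR : δ * R ≤ 1) (hx : 0 ≤ x) (hxR : x ≤ R) :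
    Real.exp (ζ.im * x) ≤ Real.exp 1 := by
  have hδ : 0 ≤ δ := (norm_nonneg ζ).trans hζδ
  have him : ζ.im ≤ δ := (im_le_norm ζ).trans hζδ
  exact Real.exp_le_exp.2 (by nlinarith)

lemma norm_kernel_mul_sub_kernel_mul_le (hζ₁0 : ζ₁ ≠ 0) (hζ₂0 : ζ₂ ≠ 0) (hζ₁ : 0 ≤ ζ₁.im)
    (hζ₂ : 0 ≤ ζ₂.im) (hζ₁δ : ‖ζ₁‖ ≤ δ) (hζ₂δ : ‖ζ₂‖ ≤ δ) (hδR : δ * R ≤ 1)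
    (hyz : y ≤ z) (hzR : z - y ≤ R) (w₁ w₂ : ℂ) :
    ‖ζ₁⁻¹ * sin (ζ₁ * (y - z)) * w₁ - ζ₂⁻¹ * sin (ζ₂ * (y - z)) * w₂‖ ≤
      2 * Real.exp 1 * δ ^ 2 * R ^ 3 * ‖w₁‖ + Real.exp 1 * (z - y) * ‖w₁ - w₂‖ := by
  have hδ : 0 ≤ δ := (norm_nonneg ζ₁).trans hζ₁δ
  have hzy : 0 ≤ z - y := sub_nonneg.2 hyz
  have hR : 0 ≤ R := hzy.trans hzR
  have hsub {ζ : ℂ} (hζ0 : ζ ≠ 0) (hζ : 0 ≤ ζ.im) (hζδ : ‖ζ‖ ≤ δ) :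
      ‖ζ⁻¹ * sin (ζ * (y - z)) - (y - z)‖ ≤ Real.exp 1 * δ ^ 2 * R ^ 3 := by
    calc _ ≤ ‖ζ‖ ^ 2 * (z - y) ^ 3 * Real.exp (ζ.im * (z - y)) :=
          norm_inv_mul_sin_sub_le hζ0 hζ hyz
      _ ≤ δ ^ 2 * R ^ 3 * Real.exp 1 :=
          mul_le_mul (by gcongr) (exp_im_mul_le_exp_one hζδ hδR hzy hzR) (by positivity)
            (by positivity)
      _ = Real.exp 1 * δ ^ 2 * R ^ 3 := by ring
  have hker : ‖ζ₂⁻¹ * sin (ζ₂ * (y - z))‖ ≤ Real.exp 1 * (z - y) := by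
    refine (norm_inv_mul_sin_le hζ₂ hyz).trans ?_
    rw [mul_comm (Real.exp 1)]
    exact mul_le_mul_of_nonneg_left (exp_im_mul_le_exp_one hζ₂δ hδR hzy hzR) hzy
  have hdecomp : ζ₁⁻¹ * sin (ζ₁ * (y - z)) * w₁ - ζ₂⁻¹ * sin (ζ₂ * (y - z)) * w₂ =
      ((ζ₁⁻¹ * sin (ζ₁ * (y - z)) - (y - z)) - (ζ₂⁻¹ * sin (ζ₂ * (y - z)) - (y - z))) * w₁ +
        ζ₂⁻¹ * sin (ζ₂ * (y - z)) * (w₁ - w₂) := by ring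
  rw [hdecomp]
  refine (norm_add_le _ _).trans (add_le_add ?_ ?_) <;> rw [norm_mul]
  · gcongr
    refine (norm_sub_le _ _).trans ?_
    linarith [hsub hζ₁0 hζ₁ hζ₁δ, hsub hζ₂0 hζ₂ hζ₂δ]
  · gcongr

end Kernel

open Complex in
structure IsJostSolution (v : ℝ → ℝ) (ζ : ℂ) (f : ℝ → ℂ) : Prop where
  continuousOn : ContinuousOn f (Ici 0)
  exists_bound : ∃ M : ℝ, ∀ x : ℝ, 0 ≤ x → Real.exp (ζ.im * x) * ‖f x‖ ≤ M
  eq : ∀ x : ℝ, 0 ≤ x →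
    f x = exp (I * ζ * x) + ζ⁻¹ * ∫ y in Ioi x, sin (ζ * ((x : ℂ) - (y : ℂ))) * (v y : ℂ) * f y

namespace IsJostSolution

open Complex

variable {v : ℝ → ℝ} {ζ ζ₁ ζ₂ : ℂ} {f f₁ f₂ : ℝ → ℂ} {x δ B R : ℝ}

lemma sub_exp_eq (hf : IsJostSolution v ζ f) (hx : 0 ≤ x) :
    f x - exp (I * ζ * x) = ∫ y in Ioi x, ζ⁻¹ * sin (ζ * (x - y)) * (v y * f y) := by
  rw [hf.eq x hx, add_sub_cancel_left, ← integral_const_mul]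
  simp only [mul_assoc]

lemma exp_mul_norm_sub_exp_le_integral (hζ : 0 ≤ ζ.im) (hf : IsJostSolution v ζ f) (hx : 0 ≤ x)
    {W : ℝ → ℝ} (hW : ∀ y ∈ Ioi x, Real.exp (ζ.im * y) * ‖f y‖ ≤ W y)
    (hint : IntegrableOn (fun y => y * |v y| * W y) (Ioi x)) :
    Real.exp (ζ.im * x) * ‖f x - exp (I * ζ * x)‖ ≤ ∫ y in Ioi x, y * |v y| * W y := by
  rw [hf.sub_exp_eq hx]
  refine (mul_le_mul_of_nonneg_left (norm_integral_le_integral_norm _) (Real.exp_pos _).le).trans ?_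
  rw [← integral_const_mul]
  refine integral_mono_of_nonneg (.of_forall fun y => by positivity) hint
    ((ae_restrict_iff' measurableSet_Ioi).2 (.of_forall fun y (hy : x < y) => ?_))
  have h := exp_mul_norm_kernel_mul_le hζ hx hy.le (v y * f y)
  rw [norm_mul (v y : ℂ), norm_real, Real.norm_eq_abs] at h
  calc _ ≤ y * (Real.exp (ζ.im * y) * (|v y| * ‖f y‖)) := h
    _ = y * |v y| * (Real.exp (ζ.im * y) * ‖f y‖) := by ring
    _ ≤ y * |v y| * W y := by
        gcongr
        · exact mul_nonneg (hx.trans hy.le) (abs_nonneg _)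
        · exact hW y hy

theorem exp_mul_norm_sub_exp_le (hg : IntegrableOn (fun y => y * |v y|) (Ioi 0))
    (hζ : 0 ≤ ζ.im) (hf : IsJostSolution v ζ f) (hx : 0 ≤ x) :
    Real.exp (ζ.im * x) * ‖f x - exp (I * ζ * x)‖ ≤
      Real.exp (2 * ∫ y in Ioi x, y * |v y|) - 1 := by
  set F : ℝ → ℝ := fun y => 1 + Real.exp (ζ.im * y) * ‖f y - exp (I * ζ * y)‖
  obtain ⟨M, hM⟩ := hf.exists_bound
  have hFM : ∀ y ∈ Ioi (0 : ℝ), ‖F y‖ ≤ M + 2 := by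
    intro y (hy : 0 < y)
    have h1 : Real.exp (ζ.im * y) * ‖exp (I * ζ * y)‖ = 1 := by
      rw [norm_exp_I_mul, ← Real.exp_add, add_neg_cancel, Real.exp_zero]
    have := mul_le_mul_of_nonneg_left (norm_sub_le (f y) (exp (I * ζ * y)))
      (Real.exp_pos (ζ.im * y)).le
    rw [Real.norm_eq_abs, abs_of_nonneg (by positivity)]
    linarith [hM y hy.le]
  have hFmeas : AEStronglyMeasurable F (volume.restrict (Ioi 0)) := by
    refine (ContinuousOn.aestronglyMeasurable ?_ measurableSet_Ici).mono_set Ioi_subset_Ici_self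
    exact continuousOn_const.add ((by fun_prop : Continuous fun y : ℝ => Real.exp (ζ.im * y))
      |>.continuousOn.mul (hf.continuousOn.sub (by fun_prop)).norm)
  have hgF : IntegrableOn (fun y => y * |v y| * F y) (Ioi 0) :=
    hg.mul_bdd hFmeas ((ae_restrict_iff' measurableSet_Ioi).2 (.of_forall hFM))
  have hF : ∀ y ∈ Ici (0 : ℝ), F y ≤ 1 + ∫ z in Ioi y, z * |v z| * F z := fun y (hy : 0 ≤ y) =>
    add_le_add le_rfl (exp_mul_norm_sub_exp_le_integral hζ hf hy
      (fun z _ => exp_mul_norm_le_one_add_exp_mul_norm_sub ζ (f z) z)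
      (hgF.mono_set (Ioi_subset_Ioi hy)))
  have := le_mul_exp_of_le_add_setIntegral_mul
    (fun y (hy : 0 < y) => mul_nonneg hy.le (abs_nonneg (v y))) (fun y _ => by positivity)
    hg hgF hF hx
  simp only [F, one_mul] at this
  linarith

theorem norm_sub_exp_le (hg : IntegrableOn (fun y => y * |v y|) (Ioi 0))
    (hζ : 0 ≤ ζ.im) (hf : IsJostSolution v ζ f) (hx : 0 ≤ x) :
    ‖f x - exp (I * ζ * x)‖ ≤
      Real.exp (-(ζ.im * x)) * (Real.exp (2 * ∫ y in Ioi x, y * |v y|) - 1) := by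
  have h := mul_le_mul_of_nonneg_left (hf.exp_mul_norm_sub_exp_le hg hζ hx)
    (Real.exp_pos (-(ζ.im * x))).le
  rwa [← mul_assoc, ← Real.exp_add, neg_add_cancel, Real.exp_zero, one_mul] at h

theorem norm_sub_exp_le_mul (hg : IntegrableOn (fun y => y * |v y|) (Ioi 0))
    (hζ : 0 ≤ ζ.im) (hf : IsJostSolution v ζ f) (hx : 0 ≤ x) :
    ‖f x - exp (I * ζ * x)‖ ≤
      2 * Real.exp (2 * ∫ y in Ioi 0, y * |v y|) * ∫ y in Ioi x, y * |v y| := by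
  set G := ∫ y in Ioi x, y * |v y|
  have hG0 : 0 ≤ G := setIntegral_nonneg measurableSet_Ioi
    fun y (hy : x < y) => mul_nonneg (hx.trans hy.le) (abs_nonneg _)
  have hG : G ≤ ∫ y in Ioi 0, y * |v y| :=
    setIntegral_mono_set hg ((ae_restrict_iff' measurableSet_Ioi).2
      (.of_forall fun y (hy : 0 < y) => mul_nonneg hy.le (abs_nonneg _)))
      (Ioi_subset_Ioi hx).eventuallyLE
  have hexp : Real.exp (-(ζ.im * x)) ≤ 1 := Real.exp_le_one_iff.2 (by nlinarith)
  have hpos : 0 ≤ Real.exp (2 * G) - 1 := by linarith [Real.one_le_exp (by linarith : 0 ≤ 2 * G)]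
  calc ‖f x - exp (I * ζ * x)‖ ≤ Real.exp (2 * G) - 1 :=
        (hf.norm_sub_exp_le hg hζ hx).trans (mul_le_of_le_one_left hpos hexp)
    _ ≤ 2 * G * Real.exp (2 * G) := Real.exp_sub_one_le_mul_exp _
    _ ≤ 2 * G * Real.exp (2 * ∫ y in Ioi 0, y * |v y|) := by gcongr
    _ = _ := by ring

theorem exp_mul_norm_le (hg : IntegrableOn (fun y => y * |v y|) (Ioi 0))
    (hζ : 0 ≤ ζ.im) (hf : IsJostSolution v ζ f) (hx : 0 ≤ x) :
    Real.exp (ζ.im * x) * ‖f x‖ ≤ Real.exp (2 * ∫ y in Ioi 0, y * |v y|) := by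
  have hG : ∫ y in Ioi x, y * |v y| ≤ ∫ y in Ioi 0, y * |v y| :=
    setIntegral_mono_set hg ((ae_restrict_iff' measurableSet_Ioi).2
      (.of_forall fun y (hy : 0 < y) => mul_nonneg hy.le (abs_nonneg _)))
      (Ioi_subset_Ioi hx).eventuallyLE
  linarith [exp_mul_norm_le_one_add_exp_mul_norm_sub ζ (f x) x, hf.exp_mul_norm_sub_exp_le hg hζ hx,
    Real.exp_le_exp.2 (mul_le_mul_of_nonneg_left hG zero_le_two)]

lemma aestronglyMeasurable_kernel (hv : Measurable v) (hf : IsJostSolution v ζ f) (hx : 0 ≤ x) :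
    AEStronglyMeasurable (fun y : ℝ => ζ⁻¹ * sin (ζ * (x - y)) * (v y * f y))
      (volume.restrict (Ioi x)) := by
  refine (Continuous.aestronglyMeasurable (by fun_prop)).mul
    ((measurable_ofReal.comp hv).aestronglyMeasurable.mul ?_)
  exact (hf.continuousOn.aestronglyMeasurable measurableSet_Ici).mono_set
    fun y (hy : x < y) => hx.trans hy.le

lemma integrableOn_kernel_and_norm_setIntegral_le (hv : Measurable v)
    (hg : IntegrableOn (fun y => y * |v y|) (Ioi 0)) (hζ : 0 ≤ ζ.im) (hf : IsJostSolution v ζ f)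
    (hB : ∀ y, 0 ≤ y → Real.exp (ζ.im * y) * ‖f y‖ ≤ B) (hx : 0 ≤ x) {s : Set ℝ}
    (hs : MeasurableSet s) (hsx : s ⊆ Ioi x) :
    IntegrableOn (fun y : ℝ => ζ⁻¹ * sin (ζ * (x - y)) * (v y * f y)) s ∧
      ‖∫ y in s, ζ⁻¹ * sin (ζ * (x - y)) * (v y * f y)‖ ≤ B * ∫ y in s, y * |v y| := by
  have hbound : ∀ᵐ (y : ℝ) ∂volume.restrict s,
      ‖ζ⁻¹ * sin (ζ * (x - y)) * (v y * f y)‖ ≤ B * (y * |v y|) :=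
    (ae_restrict_iff' hs).2 (.of_forall fun y hy =>
      norm_kernel_mul_le hζ hx (hsx hy).le (v y) (hB y (hx.trans (hsx hy).le)))
  have hgs : IntegrableOn (fun y => B * (y * |v y|)) s :=
    (hg.mono_set (hsx.trans (Ioi_subset_Ioi hx))).const_mul B
  refine ⟨hgs.mono' ((aestronglyMeasurable_kernel hv hf hx).mono_set hsx) hbound, ?_⟩
  rw [← integral_const_mul]
  exact norm_integral_le_of_norm_le hgs hbound

lemma eq_exp_add_setIntegral_Ioc_add_setIntegral_Ioi (hv : Measurable v)
    (hg : IntegrableOn (fun y => y * |v y|) (Ioi 0)) (hζ : 0 ≤ ζ.im) (hf : IsJostSolution v ζ f)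
    (hB : ∀ y, 0 ≤ y → Real.exp (ζ.im * y) * ‖f y‖ ≤ B) (hx : 0 ≤ x) (hxR : x ≤ R) :
    f x = exp (I * ζ * x) + (∫ y in Ioc x R, ζ⁻¹ * sin (ζ * (x - y)) * (v y * f y)) +
      ∫ y in Ioi R, ζ⁻¹ * sin (ζ * (x - y)) * (v y * f y) := by
  have hint :=
    (integrableOn_kernel_and_norm_setIntegral_le hv hg hζ hf hB hx measurableSet_Ioi subset_rfl).1
  rw [add_assoc, ← intervalIntegral.integral_of_le hxR,
    intervalIntegral.integral_interval_add_Ioi hint (hint.mono_set (Ioi_subset_Ioi hxR)),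
    ← hf.sub_exp_eq hx, add_sub_cancel]

lemma integrableOn_mul_norm_sub (hg : IntegrableOn (fun y => y * |v y|) (Ioi 0))
    (hζ₁ : 0 ≤ ζ₁.im) (hζ₂ : 0 ≤ ζ₂.im) (hf₁ : IsJostSolution v ζ₁ f₁)
    (hf₂ : IsJostSolution v ζ₂ f₂) :
    IntegrableOn (fun y => y * |v y| * ‖f₁ y - f₂ y‖) (Ioi 0) := by
  obtain ⟨M₁, hM₁⟩ := hf₁.exists_bound
  obtain ⟨M₂, hM₂⟩ := hf₂.exists_bound
  refine hg.mul_bdd (c := M₁ + M₂) ?_ ((ae_restrict_iff' measurableSet_Ioi).2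
    (.of_forall fun y (hy : 0 < y) => ?_))
  · exact ((hf₁.continuousOn.sub hf₂.continuousOn).norm.aestronglyMeasurable
      measurableSet_Ici).mono_set Ioi_subset_Ici_self
  · rw [norm_norm]
    exact (norm_sub_le _ _).trans (add_le_add
      (le_of_exp_mul_le (mul_nonneg hζ₁ hy.le) (norm_nonneg _) (hM₁ y hy.le))
      (le_of_exp_mul_le (mul_nonneg hζ₂ hy.le) (norm_nonneg _) (hM₂ y hy.le)))

lemma norm_setIntegral_kernel_sub_kernel_le (hv1 : IntegrableOn (fun y => |v y|) (Ioi 0))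
    (hg : IntegrableOn (fun y => y * |v y|) (Ioi 0))
    (hζ₁0 : ζ₁ ≠ 0) (hζ₂0 : ζ₂ ≠ 0) (hζ₁ : 0 ≤ ζ₁.im) (hζ₂ : 0 ≤ ζ₂.im) (hζ₁δ : ‖ζ₁‖ ≤ δ)
    (hζ₂δ : ‖ζ₂‖ ≤ δ) (hδR : δ * R ≤ 1) (hf₁ : IsJostSolution v ζ₁ f₁)
    (hf₂ : IsJostSolution v ζ₂ f₂) (hB₁ : ∀ y, 0 ≤ y → Real.exp (ζ₁.im * y) * ‖f₁ y‖ ≤ B)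
    (hx : 0 ≤ x) (hxR : x ≤ R) :
    ‖∫ y in Ioc x R, (ζ₁⁻¹ * sin (ζ₁ * (x - y)) * (v y * f₁ y) -
        ζ₂⁻¹ * sin (ζ₂ * (x - y)) * (v y * f₂ y))‖ ≤
      2 * Real.exp 1 * δ ^ 2 * R ^ 3 * B * (∫ y in Ioi 0, |v y|) +
        ∫ y in Ioc x R, Real.exp 1 * (y * |v y|) * ‖f₁ y - f₂ y‖ := by
  have hsub : Ioc x R ⊆ Ioi 0 := fun y hy => hx.trans_lt hy.1
  have hB : 0 ≤ B := (by positivity : (0 : ℝ) ≤ _).trans (hB₁ 0 le_rfl)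
  have hδ : 0 ≤ δ := (norm_nonneg ζ₁).trans hζ₁δ
  have hR : 0 ≤ R := hx.trans hxR
  set c := 2 * Real.exp 1 * δ ^ 2 * R ^ 3 * B
  have hc : 0 ≤ c := by positivity
  have hint₁ : IntegrableOn (fun y => c * |v y|) (Ioc x R) := (hv1.mono_set hsub).const_mul c
  have hint₂ : IntegrableOn (fun y => Real.exp 1 * (y * |v y|) * ‖f₁ y - f₂ y‖) (Ioc x R) := by
    have := ((integrableOn_mul_norm_sub hg hζ₁ hζ₂ hf₁ hf₂).mono_set hsub).const_mul (Real.exp 1)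
    simp only [mul_assoc] at this ⊢
    exact this
  refine (norm_integral_le_of_norm_le
    (g := fun y => c * |v y| + Real.exp 1 * (y * |v y|) * ‖f₁ y - f₂ y‖) (hint₁.add hint₂)
    ((ae_restrict_iff' measurableSet_Ioc).2 (.of_forall fun y hy => ?_))).trans ?_
  · have h := norm_kernel_mul_sub_kernel_mul_le hζ₁0 hζ₂0 hζ₁ hζ₂ hζ₁δ hζ₂δ hδR hy.1.le
      (by linarith [hy.2]) (v y * f₁ y) (v y * f₂ y)
    rw [← mul_sub, norm_mul, norm_mul, norm_real, Real.norm_eq_abs] at h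
    have hf₁y := le_of_exp_mul_le (mul_nonneg hζ₁ (hsub hy).le) (norm_nonneg _)
      (hB₁ y (hsub hy).le)
    refine h.trans (add_le_add ?_ ?_)
    · calc _ ≤ 2 * Real.exp 1 * δ ^ 2 * R ^ 3 * (|v y| * B) := by gcongr
        _ = c * |v y| := by ring
    · calc _ ≤ Real.exp 1 * y * (|v y| * ‖f₁ y - f₂ y‖) := by gcongr; linarith
        _ = _ := by ring
  · rw [integral_add hint₁ hint₂, integral_const_mul]
    refine add_le_add (mul_le_mul_of_nonneg_left ?_ hc) le_rfl
    exact setIntegral_mono_set hv1 (.of_forall fun y => abs_nonneg _) hsub.eventuallyLE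

lemma norm_sub_le_add_setIntegral (hv : Measurable v)
    (hv1 : IntegrableOn (fun y => |v y|) (Ioi 0)) (hg : IntegrableOn (fun y => y * |v y|) (Ioi 0))
    (hζ₁0 : ζ₁ ≠ 0) (hζ₂0 : ζ₂ ≠ 0) (hζ₁ : 0 ≤ ζ₁.im) (hζ₂ : 0 ≤ ζ₂.im) (hζ₁δ : ‖ζ₁‖ ≤ δ)
    (hζ₂δ : ‖ζ₂‖ ≤ δ) (hδR : δ * R ≤ 1) (hf₁ : IsJostSolution v ζ₁ f₁)
    (hf₂ : IsJostSolution v ζ₂ f₂) (hB₁ : ∀ y, 0 ≤ y → Real.exp (ζ₁.im * y) * ‖f₁ y‖ ≤ B)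
    (hB₂ : ∀ y, 0 ≤ y → Real.exp (ζ₂.im * y) * ‖f₂ y‖ ≤ B) (hx : 0 ≤ x) (hxR : x ≤ R) :
    ‖f₁ x - f₂ x‖ ≤ 2 * δ * R + 2 * Real.exp 1 * δ ^ 2 * R ^ 3 * B * (∫ y in Ioi 0, |v y|) +
      2 * B * (∫ y in Ioi R, y * |v y|) +
        ∫ y in Ioc x R, Real.exp 1 * (y * |v y|) * ‖f₁ y - f₂ y‖ := by
  have hIoc₁ := integrableOn_kernel_and_norm_setIntegral_le hv hg hζ₁ hf₁ hB₁ hx measurableSet_Ioc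
    (Ioc_subset_Ioi_self : Ioc x R ⊆ Ioi x)
  have hIoc₂ := integrableOn_kernel_and_norm_setIntegral_le hv hg hζ₂ hf₂ hB₂ hx measurableSet_Ioc
    (Ioc_subset_Ioi_self : Ioc x R ⊆ Ioi x)
  have hIoi₁ := integrableOn_kernel_and_norm_setIntegral_le hv hg hζ₁ hf₁ hB₁ hx measurableSet_Ioi
    (Ioi_subset_Ioi hxR)
  have hIoi₂ := integrableOn_kernel_and_norm_setIntegral_le hv hg hζ₂ hf₂ hB₂ hx measurableSet_Ioi
    (Ioi_subset_Ioi hxR)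
  rw [eq_exp_add_setIntegral_Ioc_add_setIntegral_Ioi hv hg hζ₁ hf₁ hB₁ hx hxR,
    eq_exp_add_setIntegral_Ioc_add_setIntegral_Ioi hv hg hζ₂ hf₂ hB₂ hx hxR]
  set u₁ := ∫ y in Ioc x R, ζ₁⁻¹ * sin (ζ₁ * (x - y)) * (v y * f₁ y)
  set u₂ := ∫ y in Ioc x R, ζ₂⁻¹ * sin (ζ₂ * (x - y)) * (v y * f₂ y)
  set t₁ := ∫ y in Ioi R, ζ₁⁻¹ * sin (ζ₁ * (x - y)) * (v y * f₁ y)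
  set t₂ := ∫ y in Ioi R, ζ₂⁻¹ * sin (ζ₂ * (x - y)) * (v y * f₂ y)
  have hu : ‖u₁ - u₂‖ ≤ 2 * Real.exp 1 * δ ^ 2 * R ^ 3 * B * (∫ y in Ioi 0, |v y|) +
      ∫ y in Ioc x R, Real.exp 1 * (y * |v y|) * ‖f₁ y - f₂ y‖ := by
    rw [← integral_sub hIoc₁.1 hIoc₂.1]
    exact norm_setIntegral_kernel_sub_kernel_le hv1 hg hζ₁0 hζ₂0 hζ₁ hζ₂ hζ₁δ hζ₂δ hδR hf₁ hf₂
      hB₁ hx hxR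
  have hsplit : exp (I * ζ₁ * x) + u₁ + t₁ - (exp (I * ζ₂ * x) + u₂ + t₂) =
      (exp (I * ζ₁ * x) - exp (I * ζ₂ * x)) + (u₁ - u₂) + t₁ - t₂ := by ring
  rw [hsplit]
  linarith [norm_sub_le ((exp (I * ζ₁ * x) - exp (I * ζ₂ * x)) + (u₁ - u₂) + t₁) t₂,
    norm_add₃_le (a := exp (I * ζ₁ * x) - exp (I * ζ₂ * x)) (b := u₁ - u₂) (c := t₁),
    norm_exp_I_mul_sub_exp_I_mul_le hζ₁ hζ₂ hζ₁δ hζ₂δ hx hxR, hIoi₁.2, hIoi₂.2]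

lemma indicator_norm_sub_le_add_setIntegral (hv : Measurable v)
    (hv1 : IntegrableOn (fun y => |v y|) (Ioi 0)) (hg : IntegrableOn (fun y => y * |v y|) (Ioi 0))
    (hζ₁0 : ζ₁ ≠ 0) (hζ₂0 : ζ₂ ≠ 0) (hζ₁ : 0 ≤ ζ₁.im) (hζ₂ : 0 ≤ ζ₂.im) (hζ₁δ : ‖ζ₁‖ ≤ δ)
    (hζ₂δ : ‖ζ₂‖ ≤ δ) (hR : 0 ≤ R) (hδR : δ * R ≤ 1) (hf₁ : IsJostSolution v ζ₁ f₁)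
    (hf₂ : IsJostSolution v ζ₂ f₂) (hB₁ : ∀ y, 0 ≤ y → Real.exp (ζ₁.im * y) * ‖f₁ y‖ ≤ B)
    (hB₂ : ∀ y, 0 ≤ y → Real.exp (ζ₂.im * y) * ‖f₂ y‖ ≤ B) (hx : 0 ≤ x) :
    (Iic R).indicator (fun y => ‖f₁ y - f₂ y‖) x ≤
      2 * δ * R + 2 * Real.exp 1 * δ ^ 2 * R ^ 3 * B * (∫ y in Ioi 0, |v y|) +
        2 * B * (∫ y in Ioi R, y * |v y|) + ∫ y in Ioi x,
          Real.exp 1 * (y * |v y|) * (Iic R).indicator (fun y => ‖f₁ y - f₂ y‖) y := by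
  simp_rw [← indicator_mul_right (Iic R) (fun y => Real.exp 1 * (y * |v y|)),
    setIntegral_indicator measurableSet_Iic, Ioi_inter_Iic]
  by_cases hxR : x ≤ R
  · rw [indicator_of_mem (show x ∈ Iic R from hxR)]
    exact norm_sub_le_add_setIntegral hv hv1 hg hζ₁0 hζ₂0 hζ₁ hζ₂ hζ₁δ hζ₂δ hδR hf₁ hf₂ hB₁ hB₂
      hx hxR
  · have hδ : 0 ≤ δ := (norm_nonneg ζ₁).trans hζ₁δ
    have hB : 0 ≤ B := (by positivity : (0 : ℝ) ≤ _).trans (hB₁ 0 le_rfl)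
    have hV : 0 ≤ ∫ y in Ioi 0, |v y| :=
      setIntegral_nonneg measurableSet_Ioi fun y _ => abs_nonneg _
    have hG : 0 ≤ ∫ y in Ioi R, y * |v y| := setIntegral_nonneg measurableSet_Ioi
      fun y (hy : R < y) => mul_nonneg (hR.trans hy.le) (abs_nonneg _)
    rw [indicator_of_notMem (show x ∉ Iic R from hxR), Ioc_eq_empty (not_lt.2 (not_le.1 hxR).le),
      Measure.restrict_empty, integral_zero_measure]
    positivity

theorem norm_sub_le_of_norm_le (hv : Measurable v)
    (hv1 : IntegrableOn (fun y => |v y|) (Ioi 0)) (hg : IntegrableOn (fun y => y * |v y|) (Ioi 0))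
    (hζ₁0 : ζ₁ ≠ 0) (hζ₂0 : ζ₂ ≠ 0) (hζ₁ : 0 ≤ ζ₁.im) (hζ₂ : 0 ≤ ζ₂.im) (hζ₁δ : ‖ζ₁‖ ≤ δ)
    (hζ₂δ : ‖ζ₂‖ ≤ δ) (hδR : δ * R ≤ 1) (hf₁ : IsJostSolution v ζ₁ f₁)
    (hf₂ : IsJostSolution v ζ₂ f₂) (hB₁ : ∀ y, 0 ≤ y → Real.exp (ζ₁.im * y) * ‖f₁ y‖ ≤ B)
    (hB₂ : ∀ y, 0 ≤ y → Real.exp (ζ₂.im * y) * ‖f₂ y‖ ≤ B) (hx : 0 ≤ x) (hxR : x ≤ R) :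
    ‖f₁ x - f₂ x‖ ≤ (2 * δ * R + 2 * Real.exp 1 * δ ^ 2 * R ^ 3 * B * (∫ y in Ioi 0, |v y|) +
      2 * B * (∫ y in Ioi R, y * |v y|)) *
        Real.exp (2 * ∫ y in Ioi x, Real.exp 1 * (y * |v y|)) := by
  have hF0 : ∀ y, 0 ≤ (Iic R).indicator (fun y => ‖f₁ y - f₂ y‖) y :=
    indicator_nonneg fun _ _ => norm_nonneg _
  have hgF : IntegrableOn (fun y => Real.exp 1 * (y * |v y|) *
      (Iic R).indicator (fun y => ‖f₁ y - f₂ y‖) y) (Ioi 0) := by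
    simp_rw [← indicator_mul_right (Iic R) (fun y => Real.exp 1 * (y * |v y|))]
    refine IntegrableOn.indicator ?_ measurableSet_Iic
    have := (integrableOn_mul_norm_sub hg hζ₁ hζ₂ hf₁ hf₂).const_mul (Real.exp 1)
    simp only [mul_assoc] at this ⊢
    exact this
  have := le_mul_exp_of_le_add_setIntegral_mul
    (fun y (hy : 0 < y) => by positivity) (fun y _ => hF0 y) (hg.const_mul _) hgF
    (fun y hy => indicator_norm_sub_le_add_setIntegral hv hv1 hg hζ₁0 hζ₂0 hζ₁ hζ₂ hζ₁δ hζ₂δ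
      (hx.trans hxR) hδR hf₁ hf₂ hB₁ hB₂ hy) hx
  rwa [indicator_of_mem (show x ∈ Iic R from hxR)] at this

end IsJostSolution

open Topology in
theorem exists_tendsto_nhdsWithin_zero_of_isJostSolution {v : ℝ → ℝ} (hv : Measurable v)
    (hv1 : IntegrableOn (fun y => |v y|) (Ioi 0)) (hg : IntegrableOn (fun y => y * |v y|) (Ioi 0))
    {θ : ℂ → ℝ → ℂ} (hθ : ∀ ζ : ℂ, 0 ≤ ζ.im → ζ ≠ 0 → IsJostSolution v ζ (θ ζ)) {x : ℝ}
    (hx : 0 ≤ x) :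
    ∃ L : ℂ, Tendsto (fun ζ : ℂ => θ ζ x) (𝓝[{ζ : ℂ | 0 ≤ ζ.im ∧ ζ ≠ 0}] 0) (𝓝 L) := by
  set S := {ζ : ℂ | 0 ≤ ζ.im ∧ ζ ≠ 0}
  have : (𝓝[S] (0 : ℂ)).NeBot := by
    refine mem_closure_iff_nhdsWithin_neBot.1 (closure_mono (s := {ζ : ℂ | 0 < ζ.im}) ?_ (by simp))
    exact fun ζ (h : 0 < ζ.im) => ⟨h.le, fun h0 => by simp [h0] at h⟩
  refine cauchy_map_iff_exists_tendsto.1 (Metric.cauchy_iff.2 ⟨inferInstance, fun ε hε => ?_⟩)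
  set B := Real.exp (2 * ∫ y in Ioi 0, y * |v y|)
  set V := ∫ y in Ioi 0, |v y|
  set Q := Real.exp (2 * ∫ y in Ioi x, Real.exp 1 * (y * |v y|))
  obtain ⟨R, hxR, hR⟩ := ((eventually_ge_atTop x).and
    ((((tendsto_setIntegral_Ioi_atTop hg).const_mul (2 * B)).mul_const Q).eventually
      (eventually_lt_nhds (show 2 * B * 0 * Q < ε / 2 by simpa using half_pos hε)))).exists
  have hδR : ∀ᶠ δ in 𝓝 (0 : ℝ), δ * R ≤ 1 :=
    ((by fun_prop : Continuous fun δ : ℝ => δ * R).tendsto' 0 0 (by simp)).eventually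
      (eventually_le_nhds one_pos)
  have hδε : ∀ᶠ δ in 𝓝 (0 : ℝ), (2 * δ * R + 2 * Real.exp 1 * δ ^ 2 * R ^ 3 * B * V) * Q < ε / 2 :=
    ((by fun_prop : Continuous fun δ : ℝ =>
      (2 * δ * R + 2 * Real.exp 1 * δ ^ 2 * R ^ 3 * B * V) * Q).tendsto' 0 0 (by simp)).eventually
      (eventually_lt_nhds (half_pos hε))
  obtain ⟨δ, ⟨hδR, hδε⟩, hδ⟩ :=
    (((hδR.and hδε).filter_mono (nhdsWithin_le_nhds (s := Ioi 0))).and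
      self_mem_nhdsWithin).exists
  refine ⟨(fun ζ => θ ζ x) '' (S ∩ Metric.closedBall 0 δ), image_mem_map (inter_mem
    self_mem_nhdsWithin (mem_nhdsWithin_of_mem_nhds (Metric.closedBall_mem_nhds 0 hδ))), ?_⟩
  rintro _ ⟨ζ₁, ⟨⟨hζ₁, hζ₁0⟩, hζ₁δ⟩, rfl⟩ _ ⟨ζ₂, ⟨⟨hζ₂, hζ₂0⟩, hζ₂δ⟩, rfl⟩
  rw [mem_closedBall_zero_iff] at hζ₁δ hζ₂δ
  rw [dist_eq_norm]
  refine ((hθ ζ₁ hζ₁ hζ₁0).norm_sub_le_of_norm_le hv hv1 hg hζ₁0 hζ₂0 hζ₁ hζ₂ hζ₁δ hζ₂δ hδR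
    (hθ ζ₂ hζ₂ hζ₂0) (fun y hy => (hθ ζ₁ hζ₁ hζ₁0).exp_mul_norm_le hg hζ₁ hy)
    (fun y hy => (hθ ζ₂ hζ₂ hζ₂0).exp_mul_norm_le hg hζ₂ hy) hx hxR).trans_lt ?_
  linarith

theorem jost_solution_low_energy_estimate_general
    (v : ℝ → ℝ) (hv_meas : Measurable v) (C₀ ρ : ℝ)
    (hρ : 2 < ρ)
    (hv : ∀ x : ℝ, 0 ≤ x → |v x| ≤ C₀ * (1 + x) ^ (-ρ))
    (θ : ℂ → ℝ → ℂ)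
    (hθcont : ∀ ζ : ℂ, 0 ≤ ζ.im → ζ ≠ 0 → ContinuousOn (θ ζ) (Set.Ici 0))
    (hθbdd : ∀ ζ : ℂ, 0 ≤ ζ.im → ζ ≠ 0 →
      ∃ M : ℝ, ∀ x : ℝ, 0 ≤ x → Real.exp (ζ.im * x) * ‖θ ζ x‖ ≤ M)
    (hθeq : ∀ ζ : ℂ, 0 ≤ ζ.im → ζ ≠ 0 → ∀ x : ℝ, 0 ≤ x →
      θ ζ x = Complex.exp (Complex.I * ζ * x) +
        ζ⁻¹ * ∫ y in Set.Ioi x, Complex.sin (ζ * ((x : ℂ) - (y : ℂ))) * (v y : ℂ) * θ ζ y) :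
    (∃ C : ℝ, 0 < C ∧
      ∀ ζ : ℂ, 0 ≤ ζ.im → ζ ≠ 0 → ∀ x : ℝ, 0 ≤ x →
        ‖θ ζ x - Complex.exp (Complex.I * ζ * x)‖ ≤
          Real.exp (-(ζ.im * x)) *
            (Real.exp (C * ∫ y in Set.Ioi x, y * |v y|) - 1)) ∧
    (∃ C' : ℝ, 0 < C' ∧
      ∀ ζ : ℂ, 0 ≤ ζ.im → ζ ≠ 0 → ∀ x : ℝ, 0 ≤ x →
        ‖θ ζ x - Complex.exp (Complex.I * ζ * x)‖ ≤
          C' * ∫ y in Set.Ioi x, y * |v y|) ∧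
    (∀ x : ℝ, 0 ≤ x → ∃ L : ℂ,
      Tendsto (fun ζ : ℂ => θ ζ x)
        (nhdsWithin 0 {ζ : ℂ | 0 ≤ ζ.im ∧ ζ ≠ 0}) (nhds L)) := by
  have hv1 : IntegrableOn (fun y => |v y|) (Ioi 0) :=
    (integrableOn_Ioi_zero_of_abs_le_rpow hv_meas (by linarith) hv).abs
  have hg := integrableOn_Ioi_zero_mul_abs_of_abs_le_rpow hv_meas hρ hv
  have hθ ζ (hζ : 0 ≤ ζ.im) (hζ0 : ζ ≠ 0) : IsJostSolution v ζ (θ ζ) :=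
    ⟨hθcont ζ hζ hζ0, hθbdd ζ hζ hζ0, hθeq ζ hζ hζ0⟩
  exact ⟨⟨2, two_pos, fun ζ hζ hζ0 x hx => (hθ ζ hζ hζ0).norm_sub_exp_le hg hζ hx⟩,
    ⟨_, by positivity, fun ζ hζ hζ0 x hx => (hθ ζ hζ hζ0).norm_sub_exp_le_mul hg hζ hx⟩,
    fun x hx => exists_tendsto_nhdsWithin_zero_of_isJostSolution hv_meas hv1 hg hθ hx⟩

/-- Low-energy estimates for `p(x,ζ) = θ(x,ζ) − e^{iζx}` and continuous
extension of `θ(x,·)` to `ζ = 0`. -/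
theorem jost_solution_low_energy_estimate
    (v : ℝ → ℝ) (hv_meas : Measurable v) (C₀ ρ : ℝ)
    (hC₀ : 0 < C₀) (hρ : 2 < ρ)
    (hv : ∀ x : ℝ, 0 ≤ x → |v x| ≤ C₀ * (1 + x) ^ (-ρ))
    (θ : ℂ → ℝ → ℂ)
    (hθcont : ∀ ζ : ℂ, 0 ≤ ζ.im → ζ ≠ 0 → ContinuousOn (θ ζ) (Set.Ici 0))
    (hθbdd : ∀ ζ : ℂ, 0 ≤ ζ.im → ζ ≠ 0 →
      ∃ M : ℝ, ∀ x : ℝ, 0 ≤ x → Real.exp (ζ.im * x) * ‖θ ζ x‖ ≤ M)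
    (hθeq : ∀ ζ : ℂ, 0 ≤ ζ.im → ζ ≠ 0 → ∀ x : ℝ, 0 ≤ x →
      θ ζ x = Complex.exp (Complex.I * ζ * x) +
        ζ⁻¹ * ∫ y in Set.Ioi x, Complex.sin (ζ * ((x : ℂ) - (y : ℂ))) * (v y : ℂ) * θ ζ y) :
    (∃ C : ℝ, 0 < C ∧
      ∀ ζ : ℂ, 0 ≤ ζ.im → ζ ≠ 0 → ∀ x : ℝ, 0 ≤ x →
        ‖θ ζ x - Complex.exp (Complex.I * ζ * x)‖ ≤
          Real.exp (-(ζ.im * x)) *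
            (Real.exp (C * ∫ y in Set.Ioi x, y * |v y|) - 1)) ∧
    (∃ C' : ℝ, 0 < C' ∧
      ∀ ζ : ℂ, 0 ≤ ζ.im → ζ ≠ 0 → ∀ x : ℝ, 0 ≤ x →
        ‖θ ζ x - Complex.exp (Complex.I * ζ * x)‖ ≤
          C' * ∫ y in Set.Ioi x, y * |v y|) ∧
    (∀ x : ℝ, 0 ≤ x → ∃ L : ℂ,
      Tendsto (fun ζ : ℂ => θ ζ x)
        (nhdsWithin 0 {ζ : ℂ | 0 ≤ ζ.im ∧ ζ ≠ 0}) (nhds L)) :=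
  jost_solution_low_energy_estimate_general v hv_meas C₀ ρ hρ hv θ hθcont hθbdd hθeq
end

section
/- For all x ≥ 0 and k > 0, the kernel r₁ satisfies r₁(x,k) := √(2/π) ∫ₓ^∞ (sin(k(y−x))/k) v(y) sin(ky − η(k)) dy = √(2/π) ∫ₓ^∞ V_v(y) sin(k(2y−x) − η(k)) dy = (1/2)√(2/π) ∫ₓ^∞ V_v((x+y)/2) sin(ky − η(k)) dy. -/
/-!
For `y > x` the kernel factor `sin (k (y - x)) / k * sin (k y - c)` is the integral of
`t ↦ sin (k (2t - x) - c)` over `[x, y]`. Exchanging the order of integration over the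
triangle `x < t ≤ y` (Fubini, justified by `∫ₓ^∞ (y - x) |v y| dy < ∞`, which is where `ρ > 2`
enters) turns the integral against `v` into one against `V_v`; the substitution
`u = 2y - x` gives the last form.
-/

open MeasureTheory Set Filter

lemma integral_sin_mul_two_mul_sub {k : ℝ} (hk : k ≠ 0) (c x y : ℝ) :
    ∫ t in x..y, Real.sin (k * (2 * t - x) - c) =
      Real.sin (k * (y - x)) / k * Real.sin (k * y - c) := by
  have h_affine : ∀ t, k * (2 * t - x) - c = 2 * k * t + (-(k * x) - c) := fun t => by ring
  simp_rw [h_affine]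
  rw [intervalIntegral.integral_comp_mul_add Real.sin (mul_ne_zero two_ne_zero hk),
    integral_sin, smul_eq_mul, Real.cos_sub_cos]
  have h_sum : (2 * k * x + (-(k * x) - c) + (2 * k * y + (-(k * x) - c))) / 2 = k * y - c := by
    ring
  have h_diff : (2 * k * x + (-(k * x) - c) - (2 * k * y + (-(k * x) - c))) / 2 =
      -(k * (y - x)) := by ring
  rw [h_sum, h_diff, Real.sin_neg]
  field_simp

lemma integrableOn_Ioi_sub_mul_of_abs_le_rpow {v : ℝ → ℝ} (hv_meas : Measurable v) {C ρ x : ℝ}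
    (hρ : 2 < ρ) (hv : ∀ y, 0 ≤ y → |v y| ≤ C * (1 + y) ^ (-ρ)) (hx : 0 ≤ x) :
    IntegrableOn (fun y => (y - x) * v y) (Ioi x) := by
  have h_majorant : Integrable (fun y : ℝ => C * (1 + ‖y‖) ^ (-(ρ - 1))) :=
    (integrable_one_add_norm (by simp; linarith)).const_mul C
  refine h_majorant.integrableOn.mono' (by fun_prop) ?_
  filter_upwards [ae_restrict_mem measurableSet_Ioi] with y (hy : x < y)
  have hy0 : 0 < 1 + y := by linarith
  have h_split : (1 + y) ^ (-(ρ - 1)) = (1 + y) * (1 + y) ^ (-ρ) := by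
    rw [show -(ρ - 1) = 1 + -ρ by ring, Real.rpow_add hy0, Real.rpow_one]
  rw [Real.norm_eq_abs, Real.norm_eq_abs, abs_of_pos (by linarith : 0 < y), h_split, abs_mul,
    abs_of_pos (by linarith : 0 < y - x)]
  calc (y - x) * |v y| ≤ (1 + y) * (C * (1 + y) ^ (-ρ)) :=
        mul_le_mul (by linarith) (hv y (by linarith)) (abs_nonneg _) hy0.le
    _ = C * ((1 + y) * (1 + y) ^ (-ρ)) := by ring

lemma integral_Ioc_norm_mul_const_le {g : ℝ → ℝ} {M : ℝ} (hgM : ∀ t, |g t| ≤ M) (a : ℝ)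
    {x y : ℝ} (hxy : x ≤ y) : ∫ t in Ioc x y, ‖g t * a‖ ≤ M * ‖(y - x) * a‖ := by
  have h_pointwise : ∀ t ∈ Ioc x y, ‖‖g t * a‖‖ ≤ M * |a| := fun t _ => by
    rw [norm_norm, norm_mul, Real.norm_eq_abs, Real.norm_eq_abs]
    exact mul_le_mul_of_nonneg_right (hgM t) (abs_nonneg _)
  calc ∫ t in Ioc x y, ‖g t * a‖ ≤ M * |a| * volume.real (Ioc x y) :=
        (Real.le_norm_self _).trans
          (norm_setIntegral_le_of_norm_le_const measure_Ioc_lt_top h_pointwise)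
    _ = M * ‖(y - x) * a‖ := by
        rw [Real.volume_real_Ioc_of_le hxy, norm_mul, Real.norm_of_nonneg (sub_nonneg.2 hxy),
          Real.norm_eq_abs]
        ring

lemma integral_Ioi_intervalIntegral_mul_eq {g v : ℝ → ℝ} {x M : ℝ} (hg : Continuous g)
    (hgM : ∀ t, |g t| ≤ M) (hv_meas : Measurable v)
    (hv : IntegrableOn (fun y => (y - x) * v y) (Ioi x)) :
    ∫ y in Ioi x, (∫ t in x..y, g t) * v y = ∫ t in Ioi x, g t * ∫ y in Ioi t, v y := by
  set μ := volume.restrict (Ioi x)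
  set F : ℝ → ℝ → ℝ := fun y t => if t ≤ y then g t * v y else 0
  have h_row : ∀ y, F y = (Iic y).indicator (fun t => g t * v y) := fun y => by
    ext t; simp only [F, indicator_apply, mem_Iic]
  have h_col : ∀ t, (F · t) = (Ici t).indicator (fun y => g t * v y) := fun t => by
    ext y; simp only [F, indicator_apply, mem_Ici]
  have h_row_restrict : ∀ y, μ.restrict (Iic y) = volume.restrict (Ioc x y) := fun y => by
    rw [Measure.restrict_restrict measurableSet_Iic, inter_comm, Ioi_inter_Iic]
  have h_meas : Measurable (Function.uncurry F) :=
    Measurable.ite (measurableSet_le measurable_snd measurable_fst)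
      ((hg.measurable.comp measurable_snd).mul (hv_meas.comp measurable_fst)) measurable_const
  have h_row_bound : ∀ y ∈ Ioi x, ∫ t, ‖F y t‖ ∂μ ≤ M * ‖(y - x) * v y‖ := fun y hy => by
    simp_rw [h_row y, norm_indicator_eq_indicator_norm]
    rw [integral_indicator measurableSet_Iic, h_row_restrict]
    exact integral_Ioc_norm_mul_const_le hgM (v y) (le_of_lt hy)
  have h_int : Integrable (Function.uncurry F) (μ.prod μ) := by
    refine (integrable_prod_iff h_meas.aestronglyMeasurable).2
      ⟨Eventually.of_forall fun y => ?_, ?_⟩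
    · change Integrable (F y) μ
      rw [h_row y, integrable_indicator_iff measurableSet_Iic, IntegrableOn, h_row_restrict]
      exact (hg.mul continuous_const).integrableOn_Ioc
    · refine (hv.norm.const_mul M).mono' h_meas.norm.aestronglyMeasurable.integral_prod_right' ?_
      filter_upwards [ae_restrict_mem measurableSet_Ioi] with y hy
      rw [Real.norm_of_nonneg (integral_nonneg fun _ => norm_nonneg _)]
      exact h_row_bound y hy
  calc ∫ y in Ioi x, (∫ t in x..y, g t) * v y = ∫ y, ∫ t, F y t ∂μ ∂μ := by
        refine setIntegral_congr_fun measurableSet_Ioi fun y hy => ?_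
        rw [h_row y, integral_indicator measurableSet_Iic, h_row_restrict, integral_mul_const,
          intervalIntegral.integral_of_le (le_of_lt hy)]
    _ = ∫ t, ∫ y, F y t ∂μ ∂μ := integral_integral_swap h_int
    _ = ∫ t in Ioi x, g t * ∫ y in Ioi t, v y := by
        refine setIntegral_congr_fun measurableSet_Ioi fun t ht => ?_
        have h_Ici : Ici t ∩ Ioi x = Ici t :=
          inter_eq_left.2 fun y (hy : t ≤ y) => (ht.trans_le hy : x < y)
        rw [h_col t, integral_indicator measurableSet_Ici,
          Measure.restrict_restrict measurableSet_Ici, h_Ici, integral_const_mul,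
          integral_Ici_eq_integral_Ioi]

lemma integral_Ioi_comp_two_mul_sub {E : Type*} [NormedAddCommGroup E] [NormedSpace ℝ E]
    (G : ℝ → E) (x : ℝ) : ∫ y in Ioi x, G (2 * y - x) = (2 : ℝ)⁻¹ • ∫ u in Ioi x, G u := by
  have h_image : (fun y => 2 * y - x) '' Ioi x = Ioi x := by
    ext u
    refine ⟨?_, fun (hu : x < u) => ⟨(u + x) / 2, show x < (u + x) / 2 by linarith, by ring⟩⟩
    rintro ⟨y, hy : x < y, rfl⟩
    show x < 2 * y - x
    linarith
  have h_deriv : ∀ y ∈ Ioi x, HasDerivWithinAt (fun y => 2 * y - x) 2 (Ioi x) y := fun y _ =>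
    (((hasDerivAt_id y).const_mul 2).sub_const x).hasDerivWithinAt.congr_deriv (mul_one 2)
  have h_inj : InjOn (fun y : ℝ => 2 * y - x) (Ioi x) := fun a _ b _ h => by
    simp only at h; linarith
  conv_rhs =>
    rw [← h_image, integral_image_eq_integral_abs_deriv_smul measurableSet_Ioi h_deriv h_inj]
  rw [integral_smul, smul_smul, abs_two, inv_mul_cancel₀ two_ne_zero, one_smul]

theorem r1_integration_by_parts_general
    (v : ℝ → ℝ) (hv_meas : Measurable v) (C₀ ρ : ℝ)
    (hρ : 2 < ρ)
    (hv : ∀ x : ℝ, 0 ≤ x → |v x| ≤ C₀ * (1 + x) ^ (-ρ))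
    (η : ℝ → ℝ)
    (Vv : ℝ → ℝ) (hVv : ∀ x : ℝ, Vv x = ∫ y in Set.Ioi x, v y) :
    ∀ x : ℝ, 0 ≤ x → ∀ k : ℝ, 0 < k →
      (Real.sqrt (2 / Real.pi) *
          ∫ y in Set.Ioi x, Real.sin (k * (y - x)) / k * v y * Real.sin (k * y - η k)) =
        Real.sqrt (2 / Real.pi) *
          ∫ y in Set.Ioi x, Vv y * Real.sin (k * (2 * y - x) - η k) ∧
      (Real.sqrt (2 / Real.pi) *
          ∫ y in Set.Ioi x, Vv y * Real.sin (k * (2 * y - x) - η k)) =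
        1 / 2 * Real.sqrt (2 / Real.pi) *
          ∫ y in Set.Ioi x, Vv ((x + y) / 2) * Real.sin (k * y - η k) := by
  intro x hx k hk
  have h_parts := integral_Ioi_intervalIntegral_mul_eq
    (g := fun t => Real.sin (k * (2 * t - x) - η k)) (by fun_prop)
    (fun t => Real.abs_sin_le_one _) hv_meas
    (integrableOn_Ioi_sub_mul_of_abs_le_rpow hv_meas hρ hv hx)
  simp only [integral_sin_mul_two_mul_sub hk.ne', ← hVv, mul_comm _ (Vv _)] at h_parts
  have h_subst :=
    integral_Ioi_comp_two_mul_sub (fun u => Vv ((x + u) / 2) * Real.sin (k * u - η k)) x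
  simp only [add_sub_cancel, mul_div_cancel_left₀ _ (two_ne_zero (α := ℝ)), smul_eq_mul] at h_subst
  simp only [mul_right_comm _ (v _)]
  exact ⟨by rw [h_parts], by rw [h_subst]; ring⟩

/-- The kernel `r₁` rewritten by integration by parts and a change of
variables, with `V_v(x) = ∫ₓ^∞ v(y) dy`. -/
theorem r1_integration_by_parts
    (v : ℝ → ℝ) (hv_meas : Measurable v) (C₀ ρ : ℝ)
    (hC₀ : 0 < C₀) (hρ : 2 < ρ)
    (hv : ∀ x : ℝ, 0 ≤ x → |v x| ≤ C₀ * (1 + x) ^ (-ρ))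
    (θ : ℝ → ℝ → ℂ)
    (hθcont : ∀ k : ℝ, k ≠ 0 → ContinuousOn (θ k) (Set.Ici 0))
    (hθbdd : ∀ k : ℝ, k ≠ 0 → ∃ M : ℝ, ∀ x : ℝ, 0 ≤ x → ‖θ k x‖ ≤ M)
    (hθeq : ∀ k : ℝ, k ≠ 0 → ∀ x : ℝ, 0 ≤ x →
      θ k x = Complex.exp (Complex.I * k * x) +
        (k : ℂ)⁻¹ * ∫ y in Set.Ioi x,
          Complex.sin ((k : ℂ) * ((x : ℂ) - (y : ℂ))) * (v y : ℂ) * θ k y)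
    (η : ℝ → ℝ)
    (hηcont : ContinuousOn η (Set.Ioi 0))
    (hηlim : Tendsto η atTop (nhds 0))
    (hηeq : ∀ k : ℝ, 0 < k →
      θ k 0 = ((‖θ k 0‖ : ℝ) : ℂ) * Complex.exp (Complex.I * η k))
    (Vv : ℝ → ℝ) (hVv : ∀ x : ℝ, Vv x = ∫ y in Set.Ioi x, v y) :
    ∀ x : ℝ, 0 ≤ x → ∀ k : ℝ, 0 < k →
      (Real.sqrt (2 / Real.pi) *
          ∫ y in Set.Ioi x, Real.sin (k * (y - x)) / k * v y * Real.sin (k * y - η k)) =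
        Real.sqrt (2 / Real.pi) *
          ∫ y in Set.Ioi x, Vv y * Real.sin (k * (2 * y - x) - η k) ∧
      (Real.sqrt (2 / Real.pi) *
          ∫ y in Set.Ioi x, Vv y * Real.sin (k * (2 * y - x) - η k)) =
        1 / 2 * Real.sqrt (2 / Real.pi) *
          ∫ y in Set.Ioi x, Vv ((x + y) / 2) * Real.sin (k * y - η k) :=
  r1_integration_by_parts_general v hv_meas C₀ ρ hρ hv η Vv hVv
end
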